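/- arXiv:1111.6303 — 5 statements merged into one kernel-verified Lean document; each statement's English description precedes it below -/
import Mathlib

section
/- Define the simplicial complex Δ[n] on vertex set {1,...,n} whose m-simplices are the sets {i₁ < i₂ < ... < i_{m+1}} with i_{j+1} − i_j ≥ 2 for all j. Then Δ[3k+1] is contractible for every natural number k. -/
/-- `s` is a face of the simplicial complex `Δ[n]`: a subset of `{1,…,n}` in which
any two distinct elements differ by at least 2. -/
def IsDeltaFace (n : ℕ) (s : Set ℕ) : Prop :=
  s ⊆ Set.Icc 1 n ∧ ∀ i ∈ s, ∀ j ∈ s, i ≠ j → i + 2 ≤ j ∨ j + 2 ≤ i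

/-- The geometric realization of `Δ[n]`: convex combinations of vertices supported
on a face. -/
abbrev DeltaRealization (n : ℕ) : Type :=
  {x : ℕ → ℝ // (∀ i, 0 ≤ x i) ∧ IsDeltaFace n (Function.support x) ∧
    ∑ i ∈ Finset.Icc 1 n, x i = 1}

/-!
Let `X_j ⊆ Δ[3k+1]` consist of the points carrying no mass on the vertices `3m+2` with
`j ≤ m < k`, so that `X_k = Δ[3k+1]`. A face in `X_0` avoids the vertex `2`, so it stays a
face after adding the vertex `1`: `X_0` is star-shaped about the vertex `1`. For `j < k`,
sliding the mass of `3j+2` onto `3j+4` deforms `X_{j+1}` into `X_j` inside `X_{j+1}`: a face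
of `X_{j+1}` containing `3j+2` misses `3j+3` and `3j+5` (the latter by the definition of
`X_{j+1}`, or because `3j+5 > 3k+1`), so it stays a face after adding `3j+4`. By induction
every `X_j` is contractible.
-/

open Function

theorem ContractibleSpace.of_homotopic_id_comp {X Y : Type*} [TopologicalSpace X]
    [TopologicalSpace Y] [ContractibleSpace Y] (f : C(X, Y)) (g : C(Y, X))
    (h : (ContinuousMap.id X).Homotopic (g.comp f)) : ContractibleSpace X := by
  obtain ⟨x, hx⟩ := ((id_nullhomotopic Y).comp_left f).comp_right g
  exact (contractible_iff_id_nullhomotopic X).2 ⟨x, h.trans hx⟩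

theorem ContractibleSpace.of_deformation_into {E : Type*} [TopologicalSpace E] {S T : Set E}
    (hTS : T ⊆ S) [ContractibleSpace T] (H : ℝ → E → E) (hH : Continuous (uncurry H))
    (hH₀ : ∀ x ∈ S, H 0 x = x) (hHS : ∀ t ∈ Set.Icc (0 : ℝ) 1, Set.MapsTo (H t) S S)
    (hHT : Set.MapsTo (H 1) S T) : ContractibleSpace S := by
  have hcont : Continuous fun p : unitInterval × S => H p.1 p.2 :=
    hH.comp (continuous_subtype_val.prodMap continuous_subtype_val)
  refine .of_homotopic_id_comp ⟨hHT.restrict, ?_⟩ ⟨_, continuous_inclusion hTS⟩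
    ⟨⟨⟨fun p => ⟨H p.1 p.2, hHS p.1 p.1.2 p.2.2⟩, hcont.subtype_mk _⟩,
      fun x => Subtype.ext (hH₀ x x.2), fun _ => rfl⟩⟩
  exact ((hH.comp (continuous_const.prodMk continuous_id)).comp
    continuous_subtype_val).subtype_mk _

namespace IsDeltaFace

variable {n a : ℕ} {s t : Set ℕ}

theorem mono (h : IsDeltaFace n t) (hst : s ⊆ t) : IsDeltaFace n s :=
  ⟨hst.trans h.1, fun i hi j hj => h.2 i (hst hi) j (hst hj)⟩

theorem insert (h : IsDeltaFace n s) (ha : a ∈ Set.Icc 1 n)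
    (hsep : ∀ b ∈ s, b ≠ a → a + 2 ≤ b ∨ b + 2 ≤ a) : IsDeltaFace n (insert a s) := by
  refine ⟨Set.insert_subset ha h.1, ?_⟩
  rintro i (rfl | hi) j (rfl | hj) hij
  · exact absurd rfl hij
  · exact hsep j hj hij.symm
  · exact (hsep i hi hij).symm
  · exact h.2 i hi j hj hij

end IsDeltaFace

/-- `DeltaRealization n` is definitionally the subtype of this set. -/
def deltaRealizationSet (n : ℕ) : Set (ℕ → ℝ) :=
  {x | (∀ i, 0 ≤ x i) ∧ IsDeltaFace n (support x) ∧ ∑ i ∈ Finset.Icc 1 n, x i = 1}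

theorem apply_eq_zero_of_mem_deltaRealizationSet {n i : ℕ} {x : ℕ → ℝ}
    (hx : x ∈ deltaRealizationSet n) (hi : i ∉ Set.Icc 1 n) : x i = 0 :=
  notMem_support.1 fun h => hi (hx.2.1.1 h)

def transferMass (a b : ℕ) (t : ℝ) (x : ℕ → ℝ) : ℕ → ℝ :=
  x + (t * x a) • (Pi.single b 1 - Pi.single a 1)

section TransferMass

variable {a b : ℕ} {t : ℝ} {x : ℕ → ℝ}

theorem transferMass_zero : transferMass a b 0 x = x := by
  simp [transferMass]

theorem transferMass_apply_of_ne {i : ℕ} (hia : i ≠ a) (hib : i ≠ b) :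
    transferMass a b t x i = x i := by
  simp [transferMass, hia, hib]

theorem transferMass_one_apply_source (hab : a ≠ b) : transferMass a b 1 x a = 0 := by
  simp [transferMass, hab]

theorem transferMass_of_apply_eq_zero (h : x a = 0) : transferMass a b t x = x := by
  simp [transferMass, h]

theorem continuous_transferMass : Continuous (uncurry (transferMass a b)) := by
  unfold transferMass
  fun_prop

theorem sum_transferMass {s : Finset ℕ} (ha : a ∈ s) (hb : b ∈ s) :
    ∑ i ∈ s, transferMass a b t x i = ∑ i ∈ s, x i := by
  simp [transferMass, Finset.sum_add_distrib, ← Finset.mul_sum, Finset.sum_sub_distrib,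
    Pi.single_apply, ha, hb]

theorem transferMass_nonneg (ht : t ∈ Set.Icc (0 : ℝ) 1) (hx : ∀ i, 0 ≤ x i) (i : ℕ) :
    0 ≤ transferMass a b t x i := by
  obtain ⟨ht0, ht1⟩ := ht
  have := hx a
  have := hx i
  simp only [transferMass, Pi.add_apply, Pi.smul_apply, Pi.sub_apply, smul_eq_mul,
    Pi.single_apply]
  split_ifs <;> subst_vars <;> nlinarith

theorem support_transferMass_subset :
    support (transferMass a b t x) ⊆ insert b (support x) := by
  intro i hi
  by_contra hi'
  simp only [Set.mem_insert_iff, not_or, mem_support, not_not] at hi'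
  by_cases hia : i = a
  · subst hia
    simp_all [transferMass]
  · exact hi (by rw [transferMass_apply_of_ne hia hi'.1, hi'.2])

end TransferMass

theorem transferMass_mem_deltaRealizationSet {n a : ℕ} {t : ℝ} {x : ℕ → ℝ}
    (hx : x ∈ deltaRealizationSet n) (ha : 1 ≤ a) (han : a + 2 ≤ n) (hx₃ : x (a + 3) = 0)
    (ht : t ∈ Set.Icc (0 : ℝ) 1) : transferMass a (a + 2) t x ∈ deltaRealizationSet n := by
  obtain ⟨hx0, hface, hsum⟩ := hx
  by_cases hxa : x a = 0
  · rw [transferMass_of_apply_eq_zero hxa]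
    exact ⟨hx0, hface, hsum⟩
  refine ⟨transferMass_nonneg ht hx0, (hface.insert ?_ ?_).mono support_transferMass_subset, ?_⟩
  · simp only [Set.mem_Icc]
    omega
  · intro c hc hca
    have hc₃ : c ≠ a + 3 := by rintro rfl; exact hc hx₃
    rcases eq_or_ne c a with rfl | hc'
    · omega
    · have := hface.2 c hc a hxa hc'
      omega
  · rw [sum_transferMass (by simp; omega) (by simp; omega), hsum]

def deltaStage (k j : ℕ) : Set (ℕ → ℝ) :=
  {x ∈ deltaRealizationSet (3 * k + 1) | ∀ m ∈ Set.Ico j k, x (3 * m + 2) = 0}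

theorem deltaStage_self (k : ℕ) : deltaStage k k = deltaRealizationSet (3 * k + 1) := by
  simp [deltaStage]

theorem deltaStage_mono (k : ℕ) : Monotone (deltaStage k) :=
  fun _ _ hij _ hx => ⟨hx.1, fun m hm => hx.2 m (Set.Ico_subset_Ico_left hij hm)⟩

theorem single_one_mem_deltaStage_zero (k : ℕ) : Pi.single 1 1 ∈ deltaStage k 0 := by
  refine ⟨⟨fun i => ?_, ?_, by simp⟩, fun m _ => by simp⟩
  · simp only [Pi.single_apply]
    split_ifs <;> norm_num
  · rw [Pi.support_single_of_ne one_ne_zero]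
    exact ⟨by simp, by simp⟩

theorem starConvex_deltaStage_zero (k : ℕ) :
    StarConvex ℝ (Pi.single 1 1) (deltaStage k 0) := by
  rintro y ⟨⟨hy0, hyface, hysum⟩, hy2⟩ a b ha hb hab
  have hsupp : support (a • Pi.single 1 1 + b • y) ⊆ insert 1 (support y) := by
    intro i hi
    by_contra hi'
    simp_all [Pi.single_apply]
  refine ⟨⟨fun i => ?_, (hyface.insert ?_ ?_).mono hsupp, ?_⟩, fun m hm => ?_⟩
  · simp only [Pi.add_apply, Pi.smul_apply, smul_eq_mul, Pi.single_apply]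
    have := hy0 i
    split_ifs <;> positivity
  · simp
  · intro c hc hc1
    have hcn := hyface.1 hc
    have hc2 : c ≠ 2 := by
      rintro rfl
      rcases k with _ | k
      · simp at hcn
      · exact hc (hy2 0 (by simp))
    simp only [Set.mem_Icc] at hcn
    omega
  · simp [Finset.sum_add_distrib, ← Finset.mul_sum, hysum, Pi.single_apply, hab]
  · simp [hy2 m hm]

theorem contractibleSpace_deltaStage_zero (k : ℕ) : ContractibleSpace (deltaStage k 0) :=
  (starConvex_deltaStage_zero k).contractibleSpace ⟨_, single_one_mem_deltaStage_zero k⟩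

section Step

variable {k j : ℕ}

theorem transferMass_mapsTo_deltaStage (hj : j < k) {t : ℝ} (ht : t ∈ Set.Icc (0 : ℝ) 1) :
    Set.MapsTo (transferMass (3 * j + 2) (3 * j + 4) t) (deltaStage k (j + 1))
      (deltaStage k (j + 1)) := by
  rintro x ⟨hx, hxstage⟩
  have hx₅ : x (3 * j + 2 + 3) = 0 := by
    rcases lt_or_ge (j + 1) k with hjk | hjk
    · exact hxstage (j + 1) ⟨le_rfl, hjk⟩
    · exact apply_eq_zero_of_mem_deltaRealizationSet hx (by simp; omega)
  refine ⟨transferMass_mem_deltaRealizationSet hx (by omega) (by omega) hx₅ ht, fun m hm => ?_⟩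
  have hjm := hm.1
  rw [transferMass_apply_of_ne (by omega) (by omega)]
  exact hxstage m hm

theorem transferMass_one_mapsTo_deltaStage (hj : j < k) :
    Set.MapsTo (transferMass (3 * j + 2) (3 * j + 4) 1) (deltaStage k (j + 1))
      (deltaStage k j) := by
  intro x hx
  obtain ⟨hy, hystage⟩ := transferMass_mapsTo_deltaStage hj ⟨zero_le_one, le_rfl⟩ hx
  refine ⟨hy, fun m ⟨hjm, hmk⟩ => ?_⟩
  rcases hjm.eq_or_lt with rfl | hjm
  · exact transferMass_one_apply_source (by omega)
  · exact hystage m ⟨hjm, hmk⟩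

theorem contractibleSpace_deltaStage_succ (hj : j < k) [ContractibleSpace (deltaStage k j)] :
    ContractibleSpace (deltaStage k (j + 1)) :=
  .of_deformation_into (deltaStage_mono k j.le_succ) _ continuous_transferMass
    (fun _ _ => transferMass_zero) (fun _ => transferMass_mapsTo_deltaStage hj)
    (transferMass_one_mapsTo_deltaStage hj)

end Step

theorem contractibleSpace_deltaStage {k j : ℕ} (hj : j ≤ k) :
    ContractibleSpace (deltaStage k j) := by
  induction j with
  | zero => exact contractibleSpace_deltaStage_zero k
  | succ j ih =>
    have := ih (by omega)
    exact contractibleSpace_deltaStage_succ hj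

/-- `Δ[3k+1]` is contractible for every natural number `k`. -/
theorem stmt_4 : ∀ k : ℕ, ContractibleSpace (DeltaRealization (3 * k + 1)) := fun k => by
  have := contractibleSpace_deltaStage (le_refl k)
  rwa [deltaStage_self] at this
end

section
/- Define the simplicial complex Δ[n] on vertex set {1,...,n} whose faces are the subsets in which any two distinct elements differ by at least 2. Then Δ[3k+2] is homotopy equivalent to the sphere S^k for every natural number k. -/
/-!
Split the vertices `1, …, 3k+2` into the `k + 1` triples `{3j, 3j+1, 3j+2}` (the vertex `0` is
absent). The weight of the middle vertex of triple `j` minus the weights of its two outer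
vertices is the `j`-th coordinate of a vector of `ℝ^{k+1}`; since a face containing a middle
vertex contains neither of its neighbours, this vector has `ℓ¹`-norm one, and normalising it gives
a map `Δ[3k+2] → S^k`. Conversely, a point `u` of `S^k`, rescaled to `ℓ¹`-norm one, is placed as
`u_j⁺` on `3j+1` and `u_j⁻` on `3j+2`; this is a section of the first map. The other composite
only moves the weight of `3j` onto `3j+2`. Doing so one triple at a time, from `j = k` down to
`j = 0`, is a homotopy inside `Δ[3k+2]`: the weight arrives at `3j+2` only once the vertex
`3j+3` has been emptied.
-/

open Finset

lemma Nat.forall_three_mul_add {P : ℕ → Prop} :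
    (∀ i, P i) ↔ ∀ j, P (3 * j) ∧ P (3 * j + 1) ∧ P (3 * j + 2) := by
  refine ⟨fun h j => ⟨h _, h _, h _⟩, fun h i => ?_⟩
  obtain ⟨h₀, h₁, h₂⟩ := h (i / 3)
  rcases (by omega : i % 3 = 0 ∨ i % 3 = 1 ∨ i % 3 = 2) with hi | hi | hi
  · convert h₀ using 1; omega
  · convert h₁ using 1; omega
  · convert h₂ using 1; omega

lemma Finset.sum_range_three_mul {M : Type*} [AddCommMonoid M] (f : ℕ → M) (m : ℕ) :
    ∑ i ∈ range (3 * m), f i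
      = ∑ j ∈ range m, (f (3 * j) + f (3 * j + 1) + f (3 * j + 2)) := by
  induction m with
  | zero => simp
  | succ m ih =>
    rw [show 3 * (m + 1) = 3 * m + 2 + 1 by ring, sum_range_succ, sum_range_succ,
      sum_range_succ, ih, sum_range_succ]
    abel

lemma Finset.sum_Icc_one_three_mul_add_two {M : Type*} [AddCommMonoid M] {f : ℕ → M}
    (hf : f 0 = 0) (k : ℕ) :
    ∑ i ∈ Icc 1 (3 * k + 2), f i
      = ∑ j ∈ range (k + 1), (f (3 * j) + f (3 * j + 1) + f (3 * j + 2)) := by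
  rw [← sum_range_three_mul, show 3 * (k + 1) = 3 * k + 2 + 1 by ring,
    sum_range_eq_add_Ico _ (by omega), Ico_add_one_right_eq_Icc, hf, zero_add]

section PosPart

variable {R : Type*} [Ring R] [LinearOrder R] [PosMulMono R] {c : R}

lemma posPart_mul_of_nonneg (hc : 0 ≤ c) (a : R) : (c * a)⁺ = c * a⁺ := by
  rw [posPart_def, posPart_def, mul_max_of_nonneg _ _ hc, mul_zero]

lemma negPart_mul_of_nonneg (hc : 0 ≤ c) (a : R) : (c * a)⁻ = c * a⁻ := by
  rw [negPart_def, negPart_def, ← mul_neg, mul_max_of_nonneg _ _ hc, mul_zero]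

end PosPart

section TripleJoin

variable {α : Type*}

def tripleJoin (a b c : ℕ → α) (i : ℕ) : α :=
  if i % 3 = 0 then a (i / 3) else if i % 3 = 1 then b (i / 3) else c (i / 3)

@[simp]
lemma tripleJoin_three_mul (a b c : ℕ → α) (j : ℕ) : tripleJoin a b c (3 * j) = a j := by
  rw [tripleJoin, if_pos (by omega), show 3 * j / 3 = j by omega]

@[simp]
lemma tripleJoin_three_mul_add_one (a b c : ℕ → α) (j : ℕ) :
    tripleJoin a b c (3 * j + 1) = b j := by
  rw [tripleJoin, if_neg (by omega), if_pos (by omega), show (3 * j + 1) / 3 = j by omega]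

@[simp]
lemma tripleJoin_three_mul_add_two (a b c : ℕ → α) (j : ℕ) :
    tripleJoin a b c (3 * j + 2) = c j := by
  rw [tripleJoin, if_neg (by omega), if_neg (by omega), show (3 * j + 2) / 3 = j by omega]

lemma tripleJoin_eq_iff {a b c x : ℕ → α} :
    tripleJoin a b c = x ↔
      ∀ j, a j = x (3 * j) ∧ b j = x (3 * j + 1) ∧ c j = x (3 * j + 2) := by
  rw [funext_iff, Nat.forall_three_mul_add]
  simp only [tripleJoin_three_mul, tripleJoin_three_mul_add_one, tripleJoin_three_mul_add_two]

lemma continuous_tripleJoin [TopologicalSpace α] {X : Type*} [TopologicalSpace X]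
    {a b c : X → ℕ → α} (ha : Continuous a) (hb : Continuous b) (hc : Continuous c) :
    Continuous fun p => tripleJoin (a p) (b p) (c p) := by
  refine continuous_pi fun i => ?_
  unfold tripleJoin
  split_ifs
  exacts [(continuous_apply _).comp ha, (continuous_apply _).comp hb,
    (continuous_apply _).comp hc]

end TripleJoin

lemma isDeltaFace_iff {n : ℕ} {s : Set ℕ} :
    IsDeltaFace n s ↔ s ⊆ Set.Icc 1 n ∧ ∀ i ∈ s, i + 1 ∉ s := by
  refine and_congr_right fun _ => ⟨fun h i hi hi' => ?_, fun h i hi j hj hij => ?_⟩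
  · have := h i hi (i + 1) hi' (by omega)
    omega
  · by_contra! hlt
    rcases (by omega : j = i + 1 ∨ i = j + 1) with rfl | rfl
    exacts [h i hi hj, h j hj hi]

namespace DeltaRealization

section Points

variable {n : ℕ} (x : DeltaRealization n)

lemma nonneg (i : ℕ) : 0 ≤ x.1 i := x.2.1 i

lemma mem_Icc_of_ne_zero {i : ℕ} (h : x.1 i ≠ 0) : i ∈ Set.Icc 1 n :=
  x.2.2.1.1 (Function.mem_support.mpr h)

lemma apply_zero : x.1 0 = 0 := by
  by_contra h
  exact absurd (x.mem_Icc_of_ne_zero h).1 (by omega)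

lemma apply_of_lt {i : ℕ} (h : n < i) : x.1 i = 0 := by
  by_contra h'
  exact absurd (x.mem_Icc_of_ne_zero h').2 (by omega)

lemma apply_eq_zero_or_apply_succ_eq_zero (i : ℕ) : x.1 i = 0 ∨ x.1 (i + 1) = 0 := by
  by_contra! h
  exact (isDeltaFace_iff.1 x.2.2.1).2 i h.1 h.2

lemma middle_eq_zero_or_ends_eq_zero (j : ℕ) :
    x.1 (3 * j + 1) = 0 ∨ x.1 (3 * j) = 0 ∧ x.1 (3 * j + 2) = 0 := by
  rcases x.apply_eq_zero_or_apply_succ_eq_zero (3 * j) with h | h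
  · rcases x.apply_eq_zero_or_apply_succ_eq_zero (3 * j + 1) with h' | h'
    exacts [Or.inl h', Or.inr ⟨h, h'⟩]
  · exact Or.inl h

end Points

variable {k : ℕ}

lemma sum_triples (x : DeltaRealization (3 * k + 2)) :
    ∑ j ∈ range (k + 1), (x.1 (3 * j) + x.1 (3 * j + 1) + x.1 (3 * j + 2)) = 1 := by
  rw [← sum_Icc_one_three_mul_add_two x.apply_zero]
  exact x.2.2.2

lemma tripleJoin_mem {a b c : ℕ → ℝ}
    (ha : ∀ j, 0 ≤ a j) (hb : ∀ j, 0 ≤ b j) (hc : ∀ j, 0 ≤ c j)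
    (ha₀ : a 0 = 0) (hvanish : ∀ j, k < j → a j = 0 ∧ b j = 0 ∧ c j = 0)
    (hab : ∀ j, a j = 0 ∨ b j = 0) (hbc : ∀ j, b j = 0 ∨ c j = 0)
    (hca : ∀ j, c j = 0 ∨ a (j + 1) = 0)
    (hsum : ∑ j ∈ range (k + 1), (a j + b j + c j) = 1) :
    (∀ i, 0 ≤ tripleJoin a b c i) ∧
      IsDeltaFace (3 * k + 2) (Function.support (tripleJoin a b c)) ∧
      ∑ i ∈ Icc 1 (3 * k + 2), tripleJoin a b c i = 1 := by
  have h₀ : tripleJoin a b c 0 = 0 := by simpa [ha₀] using tripleJoin_three_mul a b c 0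
  have hle : ∀ j, (a j ≠ 0 ∨ b j ≠ 0 ∨ c j ≠ 0) → j ≤ k := fun j h => by
    by_contra! hj
    have := hvanish j hj
    tauto
  refine ⟨Nat.forall_three_mul_add.2 fun j => by simp [ha, hb, hc],
    isDeltaFace_iff.2 ⟨fun i => ?_, fun i => ?_⟩, ?_⟩
  · revert i
    refine Nat.forall_three_mul_add.2 fun j => ⟨fun h => ?_, fun h => ?_, fun h => ?_⟩ <;>
      simp only [Function.mem_support, tripleJoin_three_mul, tripleJoin_three_mul_add_one,
        tripleJoin_three_mul_add_two] at h
    · obtain rfl | hj := eq_or_ne j 0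
      · exact absurd ha₀ h
      · have := hle j (by tauto)
        exact ⟨by omega, by omega⟩
    all_goals
      have := hle j (by tauto)
      exact ⟨by omega, by omega⟩
  · revert i
    refine Nat.forall_three_mul_add.2 fun j => ⟨?_, ?_, ?_⟩ <;>
      simp only [Function.mem_support, show 3 * j + 2 + 1 = 3 * (j + 1) by ring,
        tripleJoin_three_mul, tripleJoin_three_mul_add_one, tripleJoin_three_mul_add_two,
        not_not]
    exacts [(hab j).resolve_left, (hbc j).resolve_left, (hca j).resolve_left]
  · rw [sum_Icc_one_three_mul_add_two h₀]
    simpa using hsum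

def coord (x : ℕ → ℝ) (j : ℕ) : ℝ := x (3 * j + 1) - x (3 * j + 2) - x (3 * j)

lemma posPart_coord {n : ℕ} (x : DeltaRealization n) (j : ℕ) :
    (coord x.1 j)⁺ = x.1 (3 * j + 1) := by
  rcases x.middle_eq_zero_or_ends_eq_zero j with h | ⟨h₀, h₂⟩
  · rw [posPart_eq_zero.2, h]
    simp only [coord, h]
    linarith [x.nonneg (3 * j), x.nonneg (3 * j + 2)]
  · rw [coord, h₀, h₂, sub_zero, sub_zero, posPart_eq_self.2 (x.nonneg _)]

lemma negPart_coord {n : ℕ} (x : DeltaRealization n) (j : ℕ) :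
    (coord x.1 j)⁻ = x.1 (3 * j) + x.1 (3 * j + 2) := by
  have := posPart_sub_negPart (coord x.1 j)
  rw [posPart_coord] at this
  unfold coord at this ⊢
  linarith

noncomputable def toVec (k : ℕ) (x : ℕ → ℝ) : EuclideanSpace ℝ (Fin (k + 1)) :=
  WithLp.toLp 2 fun j => coord x j

noncomputable def l1Norm (u : EuclideanSpace ℝ (Fin (k + 1))) : ℝ := ∑ j, |u j|

def extendVec (u : EuclideanSpace ℝ (Fin (k + 1))) (j : ℕ) : ℝ :=
  if h : j < k + 1 then u ⟨j, h⟩ else 0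

noncomputable def ofVec (u : EuclideanSpace ℝ (Fin (k + 1))) : ℕ → ℝ :=
  tripleJoin 0 (fun j => (extendVec u j)⁺ / l1Norm u) (fun j => (extendVec u j)⁻ / l1Norm u)

lemma l1Norm_toVec (x : DeltaRealization (3 * k + 2)) : l1Norm (toVec k x.1) = 1 := by
  simp only [l1Norm, toVec, PiLp.toLp_apply]
  rw [Fin.sum_univ_eq_sum_range (fun j => |coord x.1 j|)]
  refine (sum_congr rfl fun j _ => ?_).trans x.sum_triples
  rw [← posPart_add_negPart, posPart_coord, negPart_coord]
  ring

lemma toVec_ne_zero (x : DeltaRealization (3 * k + 2)) : toVec k x.1 ≠ 0 := by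
  intro h
  simpa [h, l1Norm] using l1Norm_toVec x

lemma l1Norm_pos {u : EuclideanSpace ℝ (Fin (k + 1))} (hu : u ≠ 0) : 0 < l1Norm u := by
  obtain ⟨j, hj⟩ : ∃ j, u j ≠ 0 := by
    by_contra! h
    exact hu (PiLp.ext h)
  exact sum_pos' (fun i _ => abs_nonneg _) ⟨j, mem_univ _, abs_pos.2 hj⟩

lemma l1Norm_smul (c : ℝ) (u : EuclideanSpace ℝ (Fin (k + 1))) :
    l1Norm (c • u) = |c| * l1Norm u := by
  simp [l1Norm, abs_mul, mul_sum]

lemma sum_abs_extendVec (u : EuclideanSpace ℝ (Fin (k + 1))) :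
    ∑ j ∈ range (k + 1), |extendVec u j| = l1Norm u := by
  rw [l1Norm, ← Fin.sum_univ_eq_sum_range]
  simp [extendVec, Fin.is_le]

lemma extendVec_smul (c : ℝ) (u : EuclideanSpace ℝ (Fin (k + 1))) :
    extendVec (c • u) = c • extendVec u := by
  funext j
  by_cases hj : j < k + 1 <;> simp [extendVec, hj]

lemma extendVec_toVec (x : DeltaRealization (3 * k + 2)) :
    extendVec (toVec k x.1) = coord x.1 := by
  funext j
  by_cases hj : j < k + 1
  · simp [extendVec, hj, toVec]
  · simp only [extendVec, hj, dite_false, coord]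
    rw [x.apply_of_lt (by omega), x.apply_of_lt (by omega), x.apply_of_lt (by omega)]
    ring

lemma ofVec_mem {u : EuclideanSpace ℝ (Fin (k + 1))} (hu : u ≠ 0) :
    (∀ i, 0 ≤ ofVec u i) ∧ IsDeltaFace (3 * k + 2) (Function.support (ofVec u)) ∧
      ∑ i ∈ Icc 1 (3 * k + 2), ofVec u i = 1 := by
  have hN := l1Norm_pos hu
  refine tripleJoin_mem (fun _ => le_rfl) (fun j => by positivity) (fun j => by positivity) rfl
    (fun j hj => by simp [extendVec, show ¬ j < k + 1 by omega]) (fun _ => Or.inl rfl)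
    (fun j => ?_) (fun _ => Or.inr rfl) ?_
  · rcases le_total (extendVec u j) 0 with h | h
    · simp [posPart_eq_zero.2 h]
    · simp [negPart_eq_zero.2 h]
  · simp only [Pi.zero_apply, zero_add, ← add_div, posPart_add_negPart, ← sum_div,
      sum_abs_extendVec]
    exact div_self hN.ne'

lemma toVec_ofVec (u : EuclideanSpace ℝ (Fin (k + 1))) :
    toVec k (ofVec u) = (l1Norm u)⁻¹ • u := by
  ext j
  simp only [toVec, coord, ofVec, PiLp.toLp_apply, tripleJoin_three_mul,
    tripleJoin_three_mul_add_one, tripleJoin_three_mul_add_two, Pi.zero_apply, sub_zero,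
    ← sub_div, posPart_sub_negPart, PiLp.smul_apply, smul_eq_mul, extendVec, j.is_lt, dite_true]
  ring

lemma ofVec_smul {c : ℝ} (hc : 0 < c) (u : EuclideanSpace ℝ (Fin (k + 1))) :
    ofVec (c • u) = ofVec u := by
  simp only [ofVec, l1Norm_smul, abs_of_pos hc, extendVec_smul, Pi.smul_apply, smul_eq_mul,
    posPart_mul_of_nonneg hc.le, negPart_mul_of_nonneg hc.le, mul_div_mul_left _ _ hc.ne']

lemma ofVec_toVec (x : DeltaRealization (3 * k + 2)) :
    ofVec (toVec k x.1) =
      tripleJoin 0 (fun j => x.1 (3 * j + 1)) (fun j => x.1 (3 * j) + x.1 (3 * j + 2)) := by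
  simp only [ofVec, l1Norm_toVec, div_one, extendVec_toVec, posPart_coord, negPart_coord]

variable (k) in
lemma continuous_toVec : Continuous (toVec k) :=
  (PiLp.continuous_toLp 2 _).comp (continuous_pi fun j => by unfold coord; fun_prop)

lemma continuous_extendVec (j : ℕ) :
    Continuous fun u : EuclideanSpace ℝ (Fin (k + 1)) => extendVec u j := by
  unfold extendVec
  split_ifs
  · fun_prop
  · fun_prop

lemma continuous_l1Norm : Continuous (l1Norm : EuclideanSpace ℝ (Fin (k + 1)) → ℝ) := by
  unfold l1Norm
  fun_prop

variable (k)

noncomputable def toSphere :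
    C(DeltaRealization (3 * k + 2), Metric.sphere (0 : EuclideanSpace ℝ (Fin (k + 1))) 1) where
  toFun x := ⟨‖toVec k x.1‖⁻¹ • toVec k x.1, by
    rw [mem_sphere_zero_iff_norm, norm_smul, norm_inv, norm_norm,
      inv_mul_cancel₀ (norm_ne_zero_iff.2 (toVec_ne_zero x))]⟩
  continuous_toFun := by
    have h : Continuous fun x : DeltaRealization (3 * k + 2) => toVec k x.1 :=
      (continuous_toVec k).comp continuous_subtype_val
    exact ((h.norm.inv₀ fun x => norm_ne_zero_iff.2 (toVec_ne_zero x)).smul h).subtype_mk _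

noncomputable def ofSphere :
    C(Metric.sphere (0 : EuclideanSpace ℝ (Fin (k + 1))) 1, DeltaRealization (3 * k + 2)) where
  toFun u := ⟨ofVec u.1, ofVec_mem (ne_zero_of_mem_unit_sphere u)⟩
  continuous_toFun := by
    have hN : Continuous fun u : Metric.sphere (0 : EuclideanSpace ℝ (Fin (k + 1))) 1 =>
        l1Norm u.1 :=
      continuous_l1Norm.comp continuous_subtype_val
    have hN₀ : ∀ u : Metric.sphere (0 : EuclideanSpace ℝ (Fin (k + 1))) 1, l1Norm u.1 ≠ 0 :=
      fun u => (l1Norm_pos (ne_zero_of_mem_unit_sphere u)).ne'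
    refine (continuous_tripleJoin continuous_const (continuous_pi fun j => ?_)
      (continuous_pi fun j => ?_)).subtype_mk _
    · exact (continuous_posPart.comp
        ((continuous_extendVec j).comp continuous_subtype_val)).div hN hN₀
    · exact (continuous_negPart.comp
        ((continuous_extendVec j).comp continuous_subtype_val)).div hN hN₀

lemma toSphere_comp_ofSphere : (toSphere k).comp (ofSphere k) = ContinuousMap.id _ := by
  ext1 u
  apply Subtype.ext
  have hN := l1Norm_pos (ne_zero_of_mem_unit_sphere u)
  change ‖toVec k (ofVec u.1)‖⁻¹ • toVec k (ofVec u.1) = u.1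
  rw [toVec_ofVec, norm_smul, norm_inv, Real.norm_of_nonneg hN.le, norm_eq_of_mem_sphere u,
    mul_one, inv_inv, smul_smul, mul_inv_cancel₀ hN.ne', one_smul]

/-- Triple `j` slides while `(k - j) / (k + 1) ≤ t ≤ (k + 1 - j) / (k + 1)`, that is, after
triple `j + 1` has finished. -/
noncomputable def stagger (j : ℕ) (t : ℝ) : ℝ := max 0 (min 1 (j + 1 - (k + 1) * (1 - t)))

section Stagger

variable {k} {j : ℕ} {t : ℝ}

lemma stagger_nonneg : 0 ≤ stagger k j t := le_max_left _ _

lemma stagger_le_one : stagger k j t ≤ 1 := max_le zero_le_one (min_le_left _ _)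

lemma stagger_zero (hj : j ≤ k) : stagger k j 0 = 0 := by
  have : (j : ℝ) ≤ k := by exact_mod_cast hj
  exact max_eq_left (min_le_of_right_le (by linarith))

lemma stagger_one : stagger k j 1 = 1 := by
  simp [stagger, j.cast_nonneg]

lemma stagger_succ_eq_one (h : 0 < stagger k j t) : stagger k (j + 1) t = 1 := by
  have : 0 < (j : ℝ) + 1 - (k + 1) * (1 - t) := by
    by_contra! h'
    exact h.ne' (max_eq_left (min_le_of_right_le h'))
  simp only [stagger, Nat.cast_add, Nat.cast_one]
  rw [min_eq_left (by linarith), max_eq_right zero_le_one]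

@[fun_prop]
lemma continuous_stagger : Continuous (stagger k j) := by
  unfold stagger
  fun_prop

end Stagger

noncomputable def slide (t : ℝ) (x : ℕ → ℝ) : ℕ → ℝ :=
  tripleJoin (fun j => (1 - stagger k j t) * x (3 * j)) (fun j => x (3 * j + 1))
    (fun j => x (3 * j + 2) + stagger k j t * x (3 * j))

section Slide

variable {k} (x : DeltaRealization (3 * k + 2))

lemma slide_mem (t : ℝ) :
    (∀ i, 0 ≤ slide k t x.1 i) ∧
      IsDeltaFace (3 * k + 2) (Function.support (slide k t x.1)) ∧
      ∑ i ∈ Icc 1 (3 * k + 2), slide k t x.1 i = 1 := by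
  refine tripleJoin_mem (fun j => mul_nonneg (sub_nonneg.2 stagger_le_one) (x.nonneg _))
    (fun j => x.nonneg _)
    (fun j => add_nonneg (x.nonneg _) (mul_nonneg stagger_nonneg (x.nonneg _)))
    (by simp [x.apply_zero]) (fun j hj => ?_) (fun j => ?_) (fun j => ?_) (fun j => ?_) ?_
  · simp [x.apply_of_lt (show 3 * k + 2 < 3 * j by omega),
      x.apply_of_lt (show 3 * k + 2 < 3 * j + 1 by omega),
      x.apply_of_lt (show 3 * k + 2 < 3 * j + 2 by omega)]
  · rcases x.apply_eq_zero_or_apply_succ_eq_zero (3 * j) with h | h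
    · simp [h]
    · exact Or.inr h
  · rcases x.middle_eq_zero_or_ends_eq_zero j with h | ⟨h₀, h₂⟩
    · exact Or.inl h
    · simp [h₀, h₂]
  · rcases x.apply_eq_zero_or_apply_succ_eq_zero (3 * j + 2) with h | h
    · rcases (stagger_nonneg (k := k) (j := j) (t := t)).eq_or_lt with hσ | hσ
      · simp [h, ← hσ]
      · simp [stagger_succ_eq_one hσ]
    · simp [show 3 * (j + 1) = 3 * j + 2 + 1 by ring, h]
  · refine (sum_congr rfl fun j _ => ?_).trans x.sum_triples
    ring

lemma slide_zero : slide k 0 x.1 = x.1 := by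
  refine tripleJoin_eq_iff.2 fun j => ⟨?_, rfl, ?_⟩
  all_goals
    rcases le_or_gt j k with hj | hj
    · simp [stagger_zero hj]
    · simp [x.apply_of_lt (show 3 * k + 2 < 3 * j by omega)]

lemma slide_one : slide k 1 x.1 = ofVec (toVec k x.1) := by
  rw [ofVec_toVec, slide]
  simp only [stagger_one, sub_self, zero_mul, one_mul, add_comm]
  rfl

end Slide

noncomputable def slideHomotopy :
    ContinuousMap.Homotopy (ContinuousMap.id _) ((ofSphere k).comp (toSphere k)) where
  toFun p := ⟨slide k p.1 p.2.1, slide_mem p.2 p.1⟩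
  continuous_toFun := by
    have ht : Continuous fun p : unitInterval × DeltaRealization (3 * k + 2) => (p.1 : ℝ) :=
      continuous_subtype_val.comp continuous_fst
    have hx : ∀ i, Continuous fun p : unitInterval × DeltaRealization (3 * k + 2) => p.2.1 i :=
      fun i => (continuous_apply i).comp (continuous_subtype_val.comp continuous_snd)
    refine (continuous_tripleJoin ?_ ?_ ?_).subtype_mk _ <;>
      exact continuous_pi fun j => by fun_prop
  map_zero_left x := Subtype.ext (slide_zero x)
  map_one_left x := Subtype.ext <| (slide_one x).trans
    (ofVec_smul (inv_pos.2 (norm_pos_iff.2 (toVec_ne_zero x))) _).symm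

end DeltaRealization

/-- `Δ[3 * k + 2]` is homotopy equivalent to the sphere `S^k` for every natural
number `k`. -/
theorem stmt_5 :
    ∀ k : ℕ, Nonempty
      (ContinuousMap.HomotopyEquiv (DeltaRealization (3 * k + 2))
        (Metric.sphere (0 : EuclideanSpace ℝ (Fin (k + 1))) 1)) := fun k =>
  ⟨{ toFun := DeltaRealization.toSphere k
     invFun := DeltaRealization.ofSphere k
     left_inv := ⟨(DeltaRealization.slideHomotopy k).symm⟩
     right_inv := DeltaRealization.toSphere_comp_ofSphere k ▸ .refl _ }⟩
end

section
/- Define the simplicial complex Δ[n] on vertex set {1,...,n} whose faces are the subsets in which any two distinct elements differ by at least 2. Then Δ[3k+3] is homotopy equivalent to the sphere S^k for every natural number k. -/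
/-!
Once the vertices `3, …, 3j` are deleted, vertex `3j+3` of `Δ[n]` is dominated by `3j+1`: a face
containing `3j+3` avoids `3j+2`, `3j+4` and `3j`, so it stays a face when `3j+1` is added.
Sliding the weight of a dominated vertex onto its dominator is a straight-line deformation
retraction onto the complex with that vertex deleted, so deleting `3, 6, …, 3k+3` in turn keeps
the homotopy type of `Δ[3k+3]`. What remains is the join of the `k+1` pairs `{3i+1, 3i+2}`, the
boundary of the cross-polytope: sending `3i+1 ↦ -eᵢ` and `3i+2 ↦ eᵢ` identifies it with the
unit sphere of `ℓ¹`, and radial projection carries that onto the Euclidean unit sphere.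
-/

open Function

open scoped ContinuousMap

section UnitSphere

variable {E F : Type*} [NormedAddCommGroup E] [NormedSpace ℝ E] [NormedAddCommGroup F]
  [NormedSpace ℝ F]

noncomputable def ContinuousLinearEquiv.sphereNormalize (L : E ≃L[ℝ] F) :
    C(Metric.sphere (0 : E) 1, Metric.sphere (0 : F) 1) where
  toFun u := ⟨‖L u‖⁻¹ • L u, mem_sphere_zero_iff_norm.2 <|
    norm_smul_inv_norm (L.map_ne_zero_iff.2 (ne_zero_of_mem_unit_sphere u))⟩
  continuous_toFun := by
    have hL : Continuous fun u : Metric.sphere (0 : E) 1 => L u :=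
      L.continuous.comp continuous_subtype_val
    exact (hL.norm.inv₀ fun u => norm_ne_zero_iff.2
      (L.map_ne_zero_iff.2 (ne_zero_of_mem_unit_sphere u))).smul hL |>.subtype_mk _

lemma ContinuousLinearEquiv.symm_sphereNormalize_sphereNormalize (L : E ≃L[ℝ] F)
    (u : Metric.sphere (0 : E) 1) : L.symm.sphereNormalize (L.sphereNormalize u) = u := by
  have hc : 0 < ‖L u‖⁻¹ := inv_pos.2 (norm_pos_iff.2
    (L.map_ne_zero_iff.2 (ne_zero_of_mem_unit_sphere u)))
  ext1
  simp only [sphereNormalize, ContinuousMap.coe_mk, map_smul, symm_apply_apply]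
  rw [norm_smul, norm_eq_of_mem_sphere u, Real.norm_of_nonneg hc.le, mul_one, smul_smul,
    inv_mul_cancel₀ hc.ne', one_smul]

noncomputable def ContinuousLinearEquiv.unitSphereHomeomorph (L : E ≃L[ℝ] F) :
    Metric.sphere (0 : E) 1 ≃ₜ Metric.sphere (0 : F) 1 where
  toFun := L.sphereNormalize
  invFun := L.symm.sphereNormalize
  left_inv := L.symm_sphereNormalize_sphereNormalize
  right_inv := L.symm.symm_sphereNormalize_sphereNormalize

end UnitSphere

lemma Finset.sum_Icc_one_three_mul {M : Type*} [AddCommMonoid M] (x : ℕ → M) (K : ℕ) :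
    ∑ m ∈ Finset.Icc 1 (3 * K), x m =
      ∑ i ∈ Finset.range K, (x (3 * i + 1) + x (3 * i + 2) + x (3 * i + 3)) := by
  induction K with
  | zero => simp
  | succ K ih =>
    rw [Finset.sum_range_succ, ← ih, show 3 * (K + 1) = 3 * K + 2 + 1 by ring,
      Finset.sum_Icc_succ_top (by omega), Finset.sum_Icc_succ_top (by omega),
      Finset.sum_Icc_succ_top (by omega)]
    simp only [add_assoc]

lemma IsDeltaFace.mono_s6 {n : ℕ} {s t : Set ℕ} (h : IsDeltaFace n s) (hts : t ⊆ s) :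
    IsDeltaFace n t :=
  ⟨hts.trans h.1, fun i hi j hj => h.2 i (hts hi) j (hts hj)⟩

lemma IsDeltaFace.eq_zero_or_eq_zero_succ {n : ℕ} {x : ℕ → ℝ}
    (h : IsDeltaFace n (support x)) (a : ℕ) : x a = 0 ∨ x (a + 1) = 0 := by
  by_contra! hx
  have := h.2 a hx.1 (a + 1) hx.2 (by omega)
  omega

namespace DeltaComplex

-- `DeltaRealization n` is `Realization (IsDeltaFace n) (Finset.Icc 1 n)`.
abbrev Realization (F : Set ℕ → Prop) (V : Finset ℕ) : Type :=
  {x : ℕ → ℝ // (∀ i, 0 ≤ x i) ∧ F (support x) ∧ ∑ i ∈ V, x i = 1}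

section Realization

variable {F G : Set ℕ → Prop} {V : Finset ℕ}

def Realization.homeomorphOfIff (h : ∀ s, F s ↔ G s) : Realization F V ≃ₜ Realization G V where
  toFun x := ⟨x.1, x.2.1, (h _).1 x.2.2.1, x.2.2.2⟩
  invFun x := ⟨x.1, x.2.1, (h _).2 x.2.2.1, x.2.2.2⟩
  left_inv _ := rfl
  right_inv _ := rfl
  continuous_toFun := continuous_subtype_val.subtype_mk _
  continuous_invFun := continuous_subtype_val.subtype_mk _

def slide (v w : ℕ) (t : ℝ) (x : ℕ → ℝ) : ℕ → ℝ :=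
  x + (t * x v) • (Pi.single w 1 - Pi.single v 1)

variable {v w : ℕ} {t : ℝ} {x : ℕ → ℝ}

lemma slide_apply_self (hvw : v ≠ w) : slide v w t x v = (1 - t) * x v := by
  simp [slide, hvw]; ring

lemma slide_apply_target (hvw : v ≠ w) : slide v w t x w = x w + t * x v := by
  simp [slide, hvw.symm]

lemma slide_apply_of_ne {i : ℕ} (hv : i ≠ v) (hw : i ≠ w) : slide v w t x i = x i := by
  simp [slide, hv, hw]

lemma slide_zero : slide v w 0 x = x := by
  simp [slide]

lemma slide_of_eq_zero (h : x v = 0) : slide v w t x = x := by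
  simp [slide, h]

lemma sum_slide (hv : v ∈ V) (hw : w ∈ V) : ∑ i ∈ V, slide v w t x i = ∑ i ∈ V, x i := by
  simp [slide, Finset.sum_add_distrib, ← Finset.mul_sum, Finset.sum_sub_distrib, hv, hw]

lemma support_slide_subset : support (slide v w t x) ⊆ insert w (support x) := by
  intro i hi
  rw [Set.mem_insert_iff, mem_support]
  by_contra! h
  apply hi
  by_cases hiv : i = v
  · subst hiv; rw [slide_of_eq_zero h.2]; exact h.2
  · rw [slide_apply_of_ne hiv h.1, h.2]

lemma slide_nonneg (hvw : v ≠ w) (hx : ∀ i, 0 ≤ x i) (ht₀ : 0 ≤ t) (ht₁ : t ≤ 1) (i : ℕ) :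
    0 ≤ slide v w t x i := by
  by_cases hiv : i = v
  · subst hiv; rw [slide_apply_self hvw]; exact mul_nonneg (by linarith) (hx i)
  by_cases hiw : i = w
  · subst hiw; rw [slide_apply_target hvw]; exact add_nonneg (hx i) (mul_nonneg ht₀ (hx v))
  · rw [slide_apply_of_ne hiv hiw]; exact hx i

lemma continuous_slide : Continuous fun p : ℝ × (ℕ → ℝ) => slide v w p.1 p.2 := by
  unfold slide; fun_prop

lemma Realization.slide_mem (hF : ∀ ⦃s t : Set ℕ⦄, t ⊆ s → F s → F t) (hvw : v ≠ w)
    (hv : v ∈ V) (hw : w ∈ V) (hdom : ∀ s, F s → v ∈ s → F (insert w s))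
    (x : Realization F V) (ht₀ : 0 ≤ t) (ht₁ : t ≤ 1) :
    (∀ i, 0 ≤ slide v w t x.1 i) ∧ F (support (slide v w t x.1)) ∧
      ∑ i ∈ V, slide v w t x.1 i = 1 := by
  refine ⟨slide_nonneg hvw x.2.1 ht₀ ht₁, ?_, (sum_slide hv hw).trans x.2.2.2⟩
  by_cases hxv : x.1 v = 0
  · rw [slide_of_eq_zero hxv]; exact x.2.2.1
  · exact hF support_slide_subset (hdom _ x.2.2.1 hxv)

noncomputable def Realization.homotopyEquivOfDominated
    (hF : ∀ ⦃s t : Set ℕ⦄, t ⊆ s → F s → F t) (hvw : v ≠ w) (hv : v ∈ V) (hw : w ∈ V)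
    (hdom : ∀ s, F s → v ∈ s → F (insert w s)) (hG : ∀ s, G s ↔ F s ∧ v ∉ s) :
    Realization F V ≃ₕ Realization G V where
  toFun :=
    { toFun x :=
        have h := Realization.slide_mem hF hvw hv hw hdom x zero_le_one le_rfl
        ⟨slide v w 1 x.1, h.1,
          (hG _).2 ⟨h.2.1, by simp [slide_apply_self hvw]⟩, h.2.2⟩
      continuous_toFun := (continuous_slide.comp
        (continuous_const.prodMk continuous_subtype_val)).subtype_mk _ }
  invFun :=
    { toFun y := ⟨y.1, y.2.1, ((hG _).1 y.2.2.1).1, y.2.2.2⟩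
      continuous_toFun := continuous_subtype_val.subtype_mk _ }
  left_inv := ContinuousMap.Homotopic.symm
    ⟨{ toFun p := ⟨slide v w p.1 p.2.1,
          Realization.slide_mem hF hvw hv hw hdom p.2 p.1.2.1 p.1.2.2⟩
       continuous_toFun := (continuous_slide.comp ((continuous_subtype_val.comp
          continuous_fst).prodMk (continuous_subtype_val.comp continuous_snd))).subtype_mk _
       map_zero_left x := Subtype.ext slide_zero
       map_one_left _ := rfl }⟩
  right_inv := by
    convert ContinuousMap.Homotopic.refl _
    ext y i
    exact (congrFun (slide_of_eq_zero (notMem_support.mp ((hG _).1 y.2.2.1).2)) i).symm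

end Realization

section Avoiding

def IsDeltaFaceAvoiding (n j : ℕ) (s : Set ℕ) : Prop :=
  IsDeltaFace n s ∧ ∀ m < j, 3 * m + 3 ∉ s

variable {n j : ℕ} {s t : Set ℕ}

lemma IsDeltaFaceAvoiding.mono_s6 (h : IsDeltaFaceAvoiding n j s) (hts : t ⊆ s) :
    IsDeltaFaceAvoiding n j t :=
  ⟨h.1.mono_s6 hts, fun m hm hmt => h.2 m hm (hts hmt)⟩

lemma isDeltaFaceAvoiding_zero : IsDeltaFaceAvoiding n 0 s ↔ IsDeltaFace n s := by
  simp [IsDeltaFaceAvoiding]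

lemma isDeltaFaceAvoiding_succ :
    IsDeltaFaceAvoiding n (j + 1) s ↔ IsDeltaFaceAvoiding n j s ∧ 3 * j + 3 ∉ s := by
  simp only [IsDeltaFaceAvoiding, Nat.lt_succ_iff_lt_or_eq, or_imp, forall_and, forall_eq,
    and_assoc]

lemma IsDeltaFaceAvoiding.insert (h : IsDeltaFaceAvoiding n j s) (hs : 3 * j + 3 ∈ s) :
    IsDeltaFaceAvoiding n j (insert (3 * j + 1) s) := by
  obtain ⟨⟨hsub, hsep⟩, havoid⟩ := h
  have far : ∀ a ∈ s, a ≠ 3 * j + 1 → a + 2 ≤ 3 * j + 1 ∨ 3 * j + 3 ≤ a := by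
    intro a ha hne
    rcases eq_or_ne a (3 * j + 3) with rfl | h3
    · exact Or.inr le_rfl
    have hsep' := hsep a ha _ hs h3
    have ha1 := (hsub ha).1
    rcases j with _ | j
    · omega
    · have : a ≠ 3 * j + 3 := fun h => havoid j (by omega) (h ▸ ha)
      omega
  refine ⟨⟨Set.insert_subset ⟨by omega, by have := (hsub hs).2; omega⟩ hsub, ?_⟩, ?_⟩
  · rintro a (rfl | ha) b (rfl | hb) hab
    · exact absurd rfl hab
    · have := far b hb (Ne.symm hab); omega
    · have := far a ha hab; omega
    · exact hsep a ha b hb hab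
  · rintro m hm (hm' | hm')
    · omega
    · exact havoid m hm hm'

theorem nonempty_homotopyEquiv_avoiding (hj : 3 * j ≤ n) :
    Nonempty (DeltaRealization n ≃ₕ Realization (IsDeltaFaceAvoiding n j) (Finset.Icc 1 n)) := by
  induction j with
  | zero =>
    exact ⟨(Realization.homeomorphOfIff fun _ => isDeltaFaceAvoiding_zero.symm).toHomotopyEquiv⟩
  | succ j ih =>
    obtain ⟨e⟩ := ih (by omega)
    refine ⟨e.trans (Realization.homotopyEquivOfDominated (fun _ _ hts h => h.mono_s6 hts)
      (v := 3 * j + 3) (w := 3 * j + 1) (by omega) ?_ ?_ (fun _ h hs => h.insert hs)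
      fun _ => isDeltaFaceAvoiding_succ)⟩ <;>
    simp only [Finset.mem_Icc] <;> omega

end Avoiding

abbrev CrossPolytope (k : ℕ) : Type :=
  Realization (IsDeltaFaceAvoiding (3 * k + 3) (k + 1)) (Finset.Icc 1 (3 * k + 3))

namespace CrossPolytope

variable {k : ℕ}

lemma apply_eq_zero (x : CrossPolytope k) {m : ℕ} (hm : m % 3 = 0 ∨ 3 * k + 3 < m) :
    x.1 m = 0 := by
  by_contra hxm
  have hmem := x.2.2.1.1.1 hxm
  have := x.2.2.1.2 (m / 3 - 1) (by simp only [Set.mem_Icc] at hmem; omega)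
  rw [show 3 * (m / 3 - 1) + 3 = m by simp only [Set.mem_Icc] at hmem; omega] at this
  exact this hxm

lemma apply_pair_eq_zero (x : CrossPolytope k) (i : ℕ) :
    x.1 (3 * i + 1) = 0 ∨ x.1 (3 * i + 2) = 0 :=
  x.2.2.1.1.eq_zero_or_eq_zero_succ _

lemma sum_pairs (x : CrossPolytope k) :
    ∑ i ∈ Finset.range (k + 1), (x.1 (3 * i + 1) + x.1 (3 * i + 2)) = 1 := by
  have hsum := (Finset.sum_Icc_one_three_mul x.1 (k + 1)).symm.trans x.2.2.2
  refine Eq.trans (Finset.sum_congr rfl fun i hi => ?_) hsum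
  rw [apply_eq_zero x (m := 3 * i + 3) (by omega), add_zero]

def toL1 (k : ℕ) (x : ℕ → ℝ) : PiLp 1 (fun _ : Fin (k + 1) => ℝ) :=
  WithLp.toLp 1 fun i => x (3 * i + 2) - x (3 * i + 1)

lemma norm_toL1 (x : CrossPolytope k) : ‖toL1 k x.1‖ = 1 := by
  rw [PiLp.norm_eq_of_L1]
  refine Eq.trans (Finset.sum_congr rfl fun i _ => ?_)
    ((Finset.sum_range _).symm.trans (sum_pairs x))
  have h1 := x.2.1 (3 * i + 1)
  have h2 := x.2.1 (3 * i + 2)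
  simp only [toL1, PiLp.toLp_apply, Real.norm_eq_abs]
  rcases apply_pair_eq_zero x i with h | h <;> rw [h]
  · rw [sub_zero, abs_of_nonneg h2, zero_add]
  · rw [zero_sub, abs_neg, abs_of_nonneg h1, add_zero]

def ofL1 (u : PiLp 1 (fun _ : Fin (k + 1) => ℝ)) : ℕ → ℝ := fun m =>
  if h : m / 3 < k + 1 then
    if m % 3 = 1 then (u ⟨m / 3, h⟩)⁻ else if m % 3 = 2 then (u ⟨m / 3, h⟩)⁺ else 0
  else 0

section ofL1

variable (u : PiLp 1 (fun _ : Fin (k + 1) => ℝ))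

lemma ofL1_three_mul_add_one (i : Fin (k + 1)) : ofL1 u (3 * i + 1) = (u i)⁻ := by
  have h : (3 * (i : ℕ) + 1) / 3 = i := by omega
  have hi : ¬ k < i := by omega
  simp [ofL1, h, hi]

lemma ofL1_three_mul_add_two (i : Fin (k + 1)) : ofL1 u (3 * i + 2) = (u i)⁺ := by
  have h : (3 * (i : ℕ) + 2) / 3 = i := by omega
  have hi : ¬ k < i := by omega
  simp [ofL1, h, hi]

lemma ofL1_eq_zero {m : ℕ} (hm : m % 3 = 0 ∨ 3 * k + 3 < m) : ofL1 u m = 0 := by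
  unfold ofL1
  split_ifs <;> first | rfl | omega

lemma exists_of_ofL1_ne_zero {m : ℕ} (hm : ofL1 u m ≠ 0) :
    ∃ i : Fin (k + 1), (m = 3 * i + 1 ∧ u i < 0) ∨ (m = 3 * i + 2 ∧ 0 < u i) := by
  unfold ofL1 at hm
  split_ifs at hm with h
  · exact ⟨⟨m / 3, h⟩, Or.inl ⟨by simp; omega, by simpa using hm⟩⟩
  · exact ⟨⟨m / 3, h⟩, Or.inr ⟨by simp; omega, by simpa using hm⟩⟩
  all_goals exact absurd rfl hm

lemma ofL1_nonneg (m : ℕ) : 0 ≤ ofL1 u m := by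
  unfold ofL1
  split_ifs <;> first | exact le_rfl | exact negPart_nonneg _ | exact posPart_nonneg _

lemma isDeltaFaceAvoiding_support_ofL1 :
    IsDeltaFaceAvoiding (3 * k + 3) (k + 1) (support (ofL1 u)) := by
  refine ⟨⟨fun m hm => ?_, fun a ha b hb hab => ?_⟩, fun m _ hm => ?_⟩
  · obtain ⟨i, ⟨rfl, -⟩ | ⟨rfl, -⟩⟩ := exists_of_ofL1_ne_zero u hm <;>
    simp only [Set.mem_Icc] <;> omega
  · obtain ⟨i, ⟨rfl, hi⟩ | ⟨rfl, hi⟩⟩ := exists_of_ofL1_ne_zero u ha <;>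
    obtain ⟨j, ⟨rfl, hj⟩ | ⟨rfl, hj⟩⟩ := exists_of_ofL1_ne_zero u hb <;>
    rcases eq_or_ne (i : ℕ) j with hij | hij <;>
    first
    | omega
    | (obtain rfl := Fin.ext hij; linarith)
  · obtain ⟨i, ⟨h, -⟩ | ⟨h, -⟩⟩ := exists_of_ofL1_ne_zero u hm <;> omega

lemma sum_ofL1 (hu : ‖u‖ = 1) : ∑ m ∈ Finset.Icc 1 (3 * k + 3), ofL1 u m = 1 := by
  refine (Finset.sum_Icc_one_three_mul _ (k + 1)).trans ?_
  rw [← hu, PiLp.norm_eq_of_L1, Finset.sum_range]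
  refine Finset.sum_congr rfl fun i _ => ?_
  rw [ofL1_three_mul_add_one, ofL1_three_mul_add_two, ofL1_eq_zero u (by omega),
    add_zero, add_comm, posPart_add_negPart, Real.norm_eq_abs]

lemma toL1_ofL1 : toL1 k (ofL1 u) = u := by
  ext i
  simp [toL1, ofL1_three_mul_add_one, ofL1_three_mul_add_two]

lemma continuous_ofL1 : Continuous (ofL1 : PiLp 1 (fun _ : Fin (k + 1) => ℝ) → ℕ → ℝ) := by
  refine continuous_pi fun m => ?_
  unfold ofL1
  split_ifs
  · exact continuous_negPart.comp (PiLp.continuous_apply 1 _ _)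
  · exact continuous_posPart.comp (PiLp.continuous_apply 1 _ _)
  all_goals exact continuous_const

end ofL1

lemma ofL1_toL1 (x : CrossPolytope k) : ofL1 (toL1 k x.1) = x.1 := by
  funext m
  by_cases hm : m % 3 = 0 ∨ 3 * k + 3 < m
  · rw [ofL1_eq_zero _ hm, apply_eq_zero x hm]
  obtain ⟨i, rfl | rfl⟩ : ∃ i : Fin (k + 1), m = 3 * i + 1 ∨ m = 3 * i + 2 :=
    ⟨⟨m / 3, by omega⟩, by simp only; omega⟩
  · rw [ofL1_three_mul_add_one]
    rcases apply_pair_eq_zero x i with h | h <;>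
      simp [toL1, h, x.2.1 (3 * i + 1), x.2.1 (3 * i + 2)]
  · rw [ofL1_three_mul_add_two]
    rcases apply_pair_eq_zero x i with h | h <;>
      simp [toL1, h, x.2.1 (3 * i + 1), x.2.1 (3 * i + 2)]

lemma continuous_toL1 : Continuous (toL1 k) :=
  (PiLp.continuous_toLp 1 _).comp
    (continuous_pi fun _ => (continuous_apply _).sub (continuous_apply _))

noncomputable def homeomorphSphereL1 (k : ℕ) :
    CrossPolytope k ≃ₜ Metric.sphere (0 : PiLp 1 (fun _ : Fin (k + 1) => ℝ)) 1 where
  toFun x := ⟨toL1 k x.1, mem_sphere_zero_iff_norm.2 (norm_toL1 x)⟩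
  invFun u := ⟨ofL1 u.1, ofL1_nonneg u.1, isDeltaFaceAvoiding_support_ofL1 u.1,
    sum_ofL1 u.1 (mem_sphere_zero_iff_norm.1 u.2)⟩
  left_inv x := Subtype.ext (ofL1_toL1 x)
  right_inv u := Subtype.ext (toL1_ofL1 u.1)
  continuous_toFun := (continuous_toL1.comp continuous_subtype_val).subtype_mk _
  continuous_invFun := (continuous_ofL1.comp continuous_subtype_val).subtype_mk _

end CrossPolytope

end DeltaComplex

/-- `Δ[3 * k + 3]` is homotopy equivalent to the sphere `S^k` for every natural
number `k`. -/
theorem stmt_6 :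
    ∀ k : ℕ, Nonempty
      (ContinuousMap.HomotopyEquiv (DeltaRealization (3 * k + 3))
        (Metric.sphere (0 : EuclideanSpace ℝ (Fin (k + 1))) 1)) := by
  intro k
  obtain ⟨e⟩ := DeltaComplex.nonempty_homotopyEquiv_avoiding
    (n := 3 * k + 3) (j := k + 1) (by omega)
  let L : PiLp 1 (fun _ : Fin (k + 1) => ℝ) ≃L[ℝ] EuclideanSpace ℝ (Fin (k + 1)) :=
    (PiLp.continuousLinearEquiv 1 ℝ _).trans (PiLp.continuousLinearEquiv 2 ℝ _).symm
  let h := (DeltaComplex.CrossPolytope.homeomorphSphereL1 k).trans L.unitSphereHomeomorph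
  exact ⟨e.trans h.toHomotopyEquiv⟩
end

section
/- Define the simplicial complex Δ[n] on vertex set {1,...,n} whose faces are the subsets in which any two distinct elements differ by at least 2. The reduced simplicial homology of Δ[n] with coefficients in a field k vanishes in all degrees when n ≡ 1 (mod 3), and is k in degree ⌊(n−2)/3⌋ and zero elsewhere when n ≡ 2 or 0 (mod 3). -/
/-- The faces of `Δ[n]` of cardinality `m`: subsets of `{1,…,n}` with `m`
elements in which any two distinct elements differ by at least 2. -/
def deltaFaces (n m : ℕ) : Finset (Finset ℕ) :=
  ((Finset.Icc 1 n).powerset).filter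
    (fun s => s.card = m ∧ ∀ i ∈ s, ∀ j ∈ s, i < j → i + 2 ≤ j)

/-- Simplicial `m`-chains (cardinality-`m` simplices) of `Δ[n]` with coefficients
in `k`; cardinality `m` corresponds to topological dimension `m − 1`, and `m = 0`
is the augmentation spot of the reduced (augmented) chain complex. -/
abbrev deltaChains (k : Type*) (n m : ℕ) : Type _ := {s : Finset ℕ // s ∈ deltaFaces n m} → k

/-- The simplicial boundary map `∂ : C_{m+1} → C_m` (on cardinalities) of the
augmented chain complex of `Δ[n]`:
`(∂c)(t) = Σ_{s ⊇ t} (−1)^{index of the removed vertex in s} c(s)`. -/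
noncomputable def deltaBd (k : Type*) [Field k] (n m : ℕ) :
    deltaChains k n (m + 1) →ₗ[k] deltaChains k n m where
  toFun c t := ∑ s ∈ (deltaFaces n (m + 1)).attach,
    (if t.1 ⊆ s.1 then
        ((-1 : k) ^ (∑ v ∈ s.1 \ t.1, (s.1.filter (· < v)).card)) else 0) * c s
  map_add' a b := by
    funext t
    simp [Pi.add_apply, mul_add, Finset.sum_add_distrib]
  map_smul' r c := by
    funext t
    simp only [Pi.smul_apply, smul_eq_mul, RingHom.id_apply, Finset.mul_sum]
    exact Finset.sum_congr rfl (fun s _ => by ring)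

/-!
Discrete Morse theory. Write `pivot s = 3j + 1` for the least `j` with `3j + 2 ∉ s`; pivots of
`s` and `s △ {pivot s}` agree, so toggling the pivot is a matching of the faces of `Δ[n]`. A face
is unmatched exactly when its pivot exceeds `n`; then it is `{2, 5, …, 3j - 1}` with
`3j - 1 ≤ n ≤ 3j`, which forces `n ≢ 1 (mod 3)` and `j = ⌊(n-2)/3⌋ + 1`.

The matching defines a homotopy `h` with `h e_u = ± e_{u ∪ {pivot u}}`. On chains supported on
matched faces, `1 - (∂h + h∂)` strictly lowers the number of elements `≡ 2 (mod 3)`, so it is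
nilpotent there and every such cycle is a boundary of a chain in the image of `h`. At the
critical level, evaluation at the critical face `c` identifies homology with `k`: boundaries
vanish at `c` since `c` has no cofaces, and `e_c` minus an `h`-preimage of `∂ e_c` is a cycle
with value `1` at `c`.
-/

open Finset

section Homotopy

variable {R M₀ M₁ M₂ : Type*} [Ring R] [AddCommGroup M₀] [AddCommGroup M₁] [AddCommGroup M₂]
  [Module R M₀] [Module R M₁] [Module R M₂]

theorem bd_homotopy_sum_pow_apply_eq_self (d₀ : M₁ →ₗ[R] M₀) (d₁ : M₂ →ₗ[R] M₁)
    (h₀ : M₀ →ₗ[R] M₁) (h₁ : M₁ →ₗ[R] M₂) (hd : d₀ ∘ₗ d₁ = 0) {x : M₁} (hx : d₀ x = 0)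
    {w : ℕ} (hw : ((LinearMap.id - (d₁ ∘ₗ h₁ + h₀ ∘ₗ d₀) : Module.End R M₁) ^ w) x = 0) :
    d₁ (h₁ (∑ i ∈ range w,
      ((LinearMap.id - (d₁ ∘ₗ h₁ + h₀ ∘ₗ d₀) : Module.End R M₁) ^ i) x)) = x := by
  set N := LinearMap.id - (d₁ ∘ₗ h₁ + h₀ ∘ₗ d₀)
  have hN : ∀ y, d₀ y = 0 → N y = y - d₁ (h₁ y) := fun y hy => by simp [N, hy]
  have hker : ∀ i, d₀ ((N ^ i) x) = 0 := by
    intro i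
    induction i with
    | zero => simpa using hx
    | succ i ih =>
      rw [pow_succ', Module.End.mul_apply, hN _ ih, map_sub, ih, ← LinearMap.comp_apply, hd]
      simp
  calc d₁ (h₁ (∑ i ∈ range w, (N ^ i) x))
      = ∑ i ∈ range w, ((N ^ i) x - (N ^ (i + 1)) x) := by
        simp only [map_sum, pow_succ', Module.End.mul_apply, hN _ (hker _), sub_sub_cancel]
    _ = x := by rw [sum_range_sub', hw, pow_zero, sub_zero, Module.End.one_apply]

end Homotopy

theorem LinearMap.apply_eq_sum_mul_single_apply {R ι κ : Type*} [CommSemiring R] [Fintype ι]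
    [DecidableEq ι] (f : (ι → R) →ₗ[R] κ → R) (x : ι → R) (j : κ) :
    f x j = ∑ i, x i * f (Pi.single i 1) j := by
  rw [f.pi_apply_eq_sum_univ x, Finset.sum_apply]
  refine sum_congr rfl fun i _ => ?_
  rw [Pi.smul_apply, smul_eq_mul, show (fun i' => if i = i' then (1 : R) else 0) = Pi.single i 1
    from funext fun i' => by simp [Pi.single_apply, eq_comm]]

namespace Delta

variable {n m : ℕ} {s t : Finset ℕ} {a b : ℕ}

theorem mem_deltaFaces :
    s ∈ deltaFaces n m ↔ s ⊆ Icc 1 n ∧ #s = m ∧ ∀ i ∈ s, ∀ j ∈ s, i < j → i + 2 ≤ j := by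
  simp [deltaFaces]

theorem card_of_mem_deltaFaces (hs : s ∈ deltaFaces n m) : #s = m :=
  (mem_deltaFaces.1 hs).2.1

theorem mem_Icc_of_mem_deltaFaces (hs : s ∈ deltaFaces n m) (ha : a ∈ s) : 1 ≤ a ∧ a ≤ n :=
  mem_Icc.1 ((mem_deltaFaces.1 hs).1 ha)

theorem add_two_le_or_add_two_le (hs : s ∈ deltaFaces n m) (ha : a ∈ s) (hb : b ∈ s)
    (hab : a ≠ b) : a + 2 ≤ b ∨ b + 2 ≤ a := by
  have hgap := (mem_deltaFaces.1 hs).2.2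
  rcases hab.lt_or_gt with h | h
  exacts [.inl (hgap a ha b hb h), .inr (hgap b hb a ha h)]

theorem mem_deltaFaces_card_of_subset (hs : s ∈ deltaFaces n m) (ht : t ⊆ s) :
    t ∈ deltaFaces n #t := by
  obtain ⟨hsub, -, hgap⟩ := mem_deltaFaces.1 hs
  exact mem_deltaFaces.2 ⟨ht.trans hsub, rfl, fun i hi j hj => hgap i (ht hi) j (ht hj)⟩

theorem erase_mem_deltaFaces (hs : s ∈ deltaFaces n (m + 1)) (ha : a ∈ s) :
    s.erase a ∈ deltaFaces n m := by
  have h := mem_deltaFaces_card_of_subset hs (erase_subset a s)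
  rwa [card_erase_of_mem ha, card_of_mem_deltaFaces hs, Nat.add_sub_cancel] at h

theorem exists_three_mul_add_two_notMem (s : Finset ℕ) : ∃ i, 3 * i + 2 ∉ s :=
  ⟨s.sup id, fun h => by have := le_sup (f := id) h; simp only [id_eq] at this; omega⟩

def pivotIndex (s : Finset ℕ) : ℕ := Nat.find (exists_three_mul_add_two_notMem s)

def pivot (s : Finset ℕ) : ℕ := 3 * pivotIndex s + 1

theorem three_mul_pivotIndex_add_two_notMem (s : Finset ℕ) : 3 * pivotIndex s + 2 ∉ s :=
  Nat.find_spec (exists_three_mul_add_two_notMem s)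

theorem three_mul_add_two_mem_of_lt_pivotIndex {i : ℕ} (h : i < pivotIndex s) :
    3 * i + 2 ∈ s :=
  not_not.1 (Nat.find_min _ h)

theorem le_pivotIndex {j : ℕ} (h : ∀ i < j, 3 * i + 2 ∈ s) : j ≤ pivotIndex s :=
  (Nat.le_find_iff _ _).2 fun i hi => not_not.2 (h i hi)

theorem pivotIndex_congr (h : ∀ i, 3 * i + 2 ∈ s ↔ 3 * i + 2 ∈ t) :
    pivotIndex s = pivotIndex t :=
  le_antisymm
    (le_pivotIndex fun _ hi => (h _).1 (three_mul_add_two_mem_of_lt_pivotIndex hi))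
    (le_pivotIndex fun _ hi => (h _).2 (three_mul_add_two_mem_of_lt_pivotIndex hi))

theorem pivot_mod_three (s : Finset ℕ) : pivot s % 3 = 1 := by
  simp [pivot]

theorem pivot_mod_three_ne_two (s : Finset ℕ) : pivot s % 3 ≠ 2 := by
  simp [pivot]

theorem pivot_empty : pivot ∅ = 1 := by
  simp [pivot, pivotIndex, Nat.find_eq_zero]

theorem pivot_insert (ha : a % 3 ≠ 2) : pivot (insert a s) = pivot s := by
  unfold pivot
  rw [pivotIndex_congr (t := s) fun i => by simp only [mem_insert, or_iff_right_iff_imp]; omega]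

theorem pivot_erase (ha : a % 3 ≠ 2) : pivot (s.erase a) = pivot s := by
  unfold pivot
  rw [pivotIndex_congr (t := s) fun i => by simp only [mem_erase, and_iff_right_iff_imp]; omega]

theorem mod_three_eq_two_of_lt_pivot (hs : s ∈ deltaFaces n m) (ha : a ∈ s)
    (hlt : a < pivot s) : a % 3 = 2 := by
  have h1 := (mem_Icc_of_mem_deltaFaces hs ha).1
  unfold pivot at hlt
  by_contra h
  -- the element `3 * i + 2` just above or just below `a` is in `s`, too close to `a`
  obtain ⟨i, hi, hclose⟩ : ∃ i < pivotIndex s, a = 3 * i + 1 ∨ a = 3 * i + 3 :=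
    if h0 : a % 3 = 0 then ⟨a / 3 - 1, by omega, by omega⟩ else ⟨a / 3, by omega, by omega⟩
  have := add_two_le_or_add_two_le hs ha (three_mul_add_two_mem_of_lt_pivotIndex hi) (by omega)
  omega

theorem insert_pivot_mem_deltaFaces (hs : s ∈ deltaFaces n m) (h₁ : pivot s ∉ s)
    (h₂ : pivot s ≤ n) : insert (pivot s) s ∈ deltaFaces n (m + 1) := by
  obtain ⟨hsub, hcard, hgap⟩ := mem_deltaFaces.1 hs
  have hfar : ∀ x ∈ s, x + 2 ≤ pivot s ∨ pivot s + 2 ≤ x := by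
    intro x hx
    have hne : x ≠ 3 * pivotIndex s + 2 := fun h => three_mul_pivotIndex_add_two_notMem s (h ▸ hx)
    rcases lt_or_gt_of_ne (fun h : x = pivot s => h₁ (h ▸ hx)) with hlt | hlt
    · have := mod_three_eq_two_of_lt_pivot hs hx hlt
      unfold pivot at *
      omega
    · unfold pivot at *
      omega
  refine mem_deltaFaces.2 ⟨insert_subset (mem_Icc.2 ⟨by unfold pivot; omega, h₂⟩) hsub,
    by rw [card_insert_of_notMem h₁, hcard], ?_⟩
  intro i hi j hj hij
  rcases mem_insert.1 hi with rfl | hi <;> rcases mem_insert.1 hj with rfl | hj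
  · omega
  · have := hfar j hj; omega
  · have := hfar i hi; omega
  · exact hgap i hi j hj hij

def critFace (j : ℕ) : Finset ℕ := (range j).image (3 * · + 2)

theorem mem_critFace {j : ℕ} : a ∈ critFace j ↔ ∃ i < j, 3 * i + 2 = a := by
  simp [critFace]

theorem card_critFace (j : ℕ) : #(critFace j) = j := by
  rw [critFace, card_image_of_injective _ fun a b h => by omega, card_range]

theorem pivot_notMem_critFace (j : ℕ) : pivot (critFace j) ∉ critFace j := by
  rw [mem_critFace]
  have := pivot_mod_three (critFace j)
  omega

theorem eq_critFace_pivotIndex_of_lt_pivot (hs : s ∈ deltaFaces n m) (hc : n < pivot s) :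
    s = critFace (pivotIndex s) := by
  ext a
  rw [mem_critFace]
  constructor
  · intro ha
    have hlt : a < pivot s := (mem_Icc_of_mem_deltaFaces hs ha).2.trans_lt hc
    have := mod_three_eq_two_of_lt_pivot hs ha hlt
    unfold pivot at hlt
    exact ⟨a / 3, by omega, by omega⟩
  · rintro ⟨i, hi, rfl⟩
    exact three_mul_add_two_mem_of_lt_pivotIndex hi

theorem eq_critFace_of_lt_pivot (hn : 1 ≤ n) (hs : s ∈ deltaFaces n m) (hc : n < pivot s) :
    n % 3 ≠ 1 ∧ m = (n - 2) / 3 + 1 ∧ s = critFace ((n - 2) / 3 + 1) := by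
  have hs' := eq_critFace_pivotIndex_of_lt_pivot hs hc
  have hm : m = pivotIndex s := by
    rw [← card_of_mem_deltaFaces hs, ← card_critFace (pivotIndex s), ← hs']
  unfold pivot at hc
  have hpos : 0 < pivotIndex s := by omega
  have := (mem_Icc_of_mem_deltaFaces hs
    (three_mul_add_two_mem_of_lt_pivotIndex (Nat.sub_one_lt_of_lt hpos))).2
  have hj : pivotIndex s = (n - 2) / 3 + 1 := by omega
  exact ⟨by omega, hm.trans hj, hj ▸ hs'⟩

theorem critFace_mem_deltaFaces (hn : 1 ≤ n) (h : n % 3 ≠ 1) :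
    critFace ((n - 2) / 3 + 1) ∈ deltaFaces n ((n - 2) / 3 + 1) := by
  refine mem_deltaFaces.2 ⟨fun a ha => ?_, card_critFace _, fun a ha b hb hab => ?_⟩
  · obtain ⟨i, hi, rfl⟩ := mem_critFace.1 ha
    exact mem_Icc.2 ⟨by omega, by omega⟩
  · obtain ⟨i, -, rfl⟩ := mem_critFace.1 ha
    obtain ⟨j, -, rfl⟩ := mem_critFace.1 hb
    omega

theorem critFace_not_subset (hn : 1 ≤ n) (h : n % 3 ≠ 1) (hs : s ∈ deltaFaces n ((n - 2) / 3 + 2)) :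
    ¬ critFace ((n - 2) / 3 + 1) ⊆ s := by
  intro hsub
  have hj : (n - 2) / 3 + 1 ≤ pivotIndex s :=
    le_pivotIndex fun i hi => hsub (mem_critFace.2 ⟨i, hi, rfl⟩)
  have := (eq_critFace_of_lt_pivot hn hs (by unfold pivot; omega)).2.1
  omega

def weight (s : Finset ℕ) : ℕ := #{x ∈ s | x % 3 = 2}

theorem weight_le_card (s : Finset ℕ) : weight s ≤ #s :=
  card_filter_le _ _

theorem weight_insert (ha : a ∉ s) :
    weight (insert a s) = weight s + if a % 3 = 2 then 1 else 0 := by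
  unfold weight
  rw [filter_insert]
  split_ifs with h
  · rw [card_insert_of_notMem fun h' => ha (mem_filter.1 h').1]
  · rfl

theorem weight_eq_card_of_lt_pivot (hs : s ∈ deltaFaces n m) (hc : n < pivot s) :
    weight s = #s := by
  rw [weight, filter_true_of_mem fun a ha => mod_three_eq_two_of_lt_pivot hs ha
    ((mem_Icc_of_mem_deltaFaces hs ha).2.trans_lt hc)]

section Incidence

variable {k : Type*} [CommRing k]

def insertSign (s : Finset ℕ) (v : ℕ) : k := (-1) ^ #{x ∈ s | x < v}

theorem insertSign_mul_self (s : Finset ℕ) (v : ℕ) : insertSign s v * insertSign s v = (1 : k) := by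
  rw [insertSign, ← pow_add, ← two_mul, pow_mul, neg_one_sq, one_pow]

theorem insertSign_insert_self (s : Finset ℕ) (v : ℕ) :
    insertSign (insert v s) v = (insertSign s v : k) := by
  rw [insertSign, insertSign, filter_insert, if_neg (lt_irrefl v)]

theorem insertSign_insert (ha : a ∉ s) (b : ℕ) :
    insertSign (insert a s) b = if a < b then -insertSign s b else (insertSign s b : k) := by
  unfold insertSign
  rw [filter_insert]
  split_ifs with h
  · rw [card_insert_of_notMem fun h' => ha (mem_filter.1 h').1, pow_succ, mul_neg_one]
  · rfl

theorem insertSign_mul_insertSign_insert_add (hab : a ≠ b) (ha : a ∉ s) (hb : b ∉ s) :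
    insertSign s a * insertSign (insert a s) b + insertSign s b * insertSign (insert b s) a
      = (0 : k) := by
  rw [insertSign_insert ha, insertSign_insert hb]
  rcases hab.lt_or_gt with h | h
  · rw [if_pos h, if_neg h.not_gt]; ring
  · rw [if_neg h.not_gt, if_pos h]; ring

theorem insertSign_insert_mul_insertSign_insert (hab : a ≠ b) (ha : a ∉ s) (hb : b ∉ s) :
    insertSign (insert a s) b * insertSign (insert b s) a
      = -(insertSign s a * insertSign s b : k) := by
  rw [insertSign_insert ha, insertSign_insert hb]
  rcases hab.lt_or_gt with h | h
  · rw [if_pos h, if_neg h.not_gt]; ring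
  · rw [if_neg h.not_gt, if_pos h]; ring

/-- The incidence number `[s : t]` of the simplicial boundary, as in `deltaBd`. -/
def bdCoeff (t s : Finset ℕ) : k :=
  if t ⊆ s then (-1) ^ ∑ v ∈ s \ t, #{x ∈ s | x < v} else 0

theorem bdCoeff_of_not_subset (h : ¬ t ⊆ s) : bdCoeff t s = (0 : k) :=
  if_neg h

theorem bdCoeff_insert (ha : a ∉ t) : bdCoeff t (insert a t) = (insertSign t a : k) := by
  rw [bdCoeff, if_pos (subset_insert a t), insert_sdiff_cancel ha, sum_singleton, insertSign,
    filter_insert, if_neg (lt_irrefl a)]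

theorem subset_of_bdCoeff_mul_bdCoeff_ne_zero {r : Finset ℕ}
    (h : bdCoeff t s * bdCoeff s r ≠ (0 : k)) : t ⊆ s ∧ s ⊆ r := by
  by_contra hc
  refine h ?_
  by_cases hts : t ⊆ s
  · rw [bdCoeff_of_not_subset fun hsr => hc ⟨hts, hsr⟩, mul_zero]
  · rw [bdCoeff_of_not_subset hts, zero_mul]

theorem sum_bdCoeff_mul_bdCoeff {F : Finset (Finset ℕ)} {r : Finset ℕ}
    (hr : #r = #t + 2) (hF : ∀ s ∈ F, #s = #t + 1)
    (hmem : ∀ s, t ⊆ s → s ⊆ r → #s = #t + 1 → s ∈ F) :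
    ∑ s ∈ F, bdCoeff t s * bdCoeff s r = (0 : k) := by
  by_cases htr : t ⊆ r
  swap
  · exact sum_eq_zero fun s _ => not_not.1 fun h =>
      htr ((subset_of_bdCoeff_mul_bdCoeff_ne_zero h).1.trans
        (subset_of_bdCoeff_mul_bdCoeff_ne_zero h).2)
  obtain ⟨a, b, hab, hrt⟩ := card_eq_two.1 (show #(r \ t) = 2 by
    rw [card_sdiff_of_subset htr]; omega)
  have ha : a ∈ r ∧ a ∉ t := mem_sdiff.1 (hrt ▸ mem_insert_self a {b})
  have hb : b ∈ r ∧ b ∉ t := mem_sdiff.1 (hrt ▸ mem_insert_of_mem (mem_singleton_self b))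
  have hr : r = insert a (insert b t) := by
    rw [← sdiff_union_of_subset htr, hrt, insert_union, singleton_union]
  have hsa : insert a t ∈ F :=
    hmem _ (subset_insert a t) (insert_subset ha.1 htr) (card_insert_of_notMem ha.2)
  have hsb : insert b t ∈ F :=
    hmem _ (subset_insert b t) (insert_subset hb.1 htr) (card_insert_of_notMem hb.2)
  have hne : insert a t ≠ insert b t := fun h =>
    hab ((mem_insert.1 (h ▸ mem_insert_self a t)).resolve_right ha.2)
  rw [← sum_subset (insert_subset hsa (singleton_subset_iff.2 hsb)), sum_pair hne]
  · have h₁ : bdCoeff (insert a t) r = (insertSign (insert a t) b : k) := by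
      rw [hr, insert_comm, bdCoeff_insert (by simp [hab.symm, hb.2])]
    have h₂ : bdCoeff (insert b t) r = (insertSign (insert b t) a : k) := by
      rw [hr, bdCoeff_insert (by simp [hab, ha.2])]
    rw [bdCoeff_insert ha.2, bdCoeff_insert hb.2, h₁, h₂]
    exact insertSign_mul_insertSign_insert_add hab ha.2 hb.2
  · intro s hsF hs
    refine not_not.1 fun h => ?_
    obtain ⟨hts, hsr⟩ := subset_of_bdCoeff_mul_bdCoeff_ne_zero h
    obtain ⟨v, hvt, rfl⟩ := exists_eq_insert_iff.2 ⟨hts, (hF s hsF).symm⟩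
    have hv : v ∈ r \ t := mem_sdiff.2 ⟨hsr (mem_insert_self v t), hvt⟩
    rw [hrt, mem_insert, mem_singleton] at hv
    rcases hv with rfl | rfl <;> simp at hs

theorem bdCoeff_erase (ha : a ∈ s) : bdCoeff (s.erase a) s = (insertSign s a : k) := by
  have h₁ := bdCoeff_insert (k := k) (notMem_erase a s)
  have h₂ := insertSign_insert_self (k := k) (s.erase a) a
  rw [insert_erase ha] at h₁ h₂
  rw [h₁, h₂]

/-- The matrix entry of `∂ ∘ homotopy` at `(t, u)`. -/
def upCoeff (n : ℕ) (u t : Finset ℕ) : k :=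
  if pivot u ∉ u ∧ pivot u ≤ n then insertSign u (pivot u) * bdCoeff t (insert (pivot u) u)
  else 0

/-- The matrix entry of `homotopy ∘ ∂` at `(t, u)`. -/
def downCoeff (u t : Finset ℕ) : k :=
  if pivot t ∈ t then insertSign t (pivot t) * bdCoeff (t.erase (pivot t)) u else 0

theorem upCoeff_self (h₁ : pivot t ∉ t) (h₂ : pivot t ≤ n) : upCoeff n t t = (1 : k) := by
  rw [upCoeff, if_pos ⟨h₁, h₂⟩, bdCoeff_insert h₁, insertSign_mul_self]

theorem upCoeff_add_downCoeff_self (h : pivot t ≤ n) :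
    upCoeff n t t + downCoeff t t = (1 : k) := by
  by_cases ht : pivot t ∈ t
  · rw [upCoeff, if_neg fun h' => h'.1 ht, downCoeff, if_pos ht, bdCoeff_erase ht,
      insertSign_mul_self, zero_add]
  · rw [upCoeff_self ht h, downCoeff, if_neg ht, add_zero]

theorem exists_eq_insert_of_weight_le {u p : Finset ℕ} (hpu : p ⊆ u) (hcard : #p + 1 = #u)
    (ht : t = insert a p) (ha : a % 3 = 1) (hne : u ≠ t) (hw : weight u ≤ weight t) :
    ∃ b ∉ p, b ≠ a ∧ b % 3 ≠ 2 ∧ u = insert b p := by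
  obtain ⟨b, hbp, rfl⟩ := exists_eq_insert_iff.2 ⟨hpu, hcard⟩
  refine ⟨b, hbp, fun hba => hne (hba ▸ ht.symm), fun hb => ?_, rfl⟩
  have hap : a ∉ p := fun hap => by
    rw [ht, insert_eq_of_mem hap, weight_insert hbp, if_pos hb] at hw
    omega
  rw [ht, weight_insert hbp, weight_insert hap, if_pos hb, if_neg (by omega)] at hw
  omega

def IsPivotExchange (n : ℕ) (u t : Finset ℕ) : Prop :=
  ∃ p b, pivot p ∉ p ∧ b ∉ p ∧ b ≠ pivot p ∧ b % 3 ≠ 2 ∧ pivot p ≤ n ∧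
    u = insert b p ∧ t = insert (pivot p) p

theorem upCoeff_add_downCoeff_of_isPivotExchange {u : Finset ℕ} (h : IsPivotExchange n u t) :
    upCoeff n u t + downCoeff u t = (0 : k) := by
  obtain ⟨p, b, hvp, hwp, hwv, hw, hvn, rfl, rfl⟩ := h
  have hu : pivot (insert b p) = pivot p := pivot_insert hw
  have ht : pivot (insert (pivot p) p) = pivot p := pivot_insert (pivot_mod_three_ne_two p)
  have hvu : pivot p ∉ insert b p := by simp [hwv.symm, hvp]
  have hwt : b ∉ insert (pivot p) p := by simp [hwv, hwp]
  rw [upCoeff, downCoeff, hu, ht, if_pos ⟨hvu, hvn⟩, if_pos (mem_insert_self _ p), insert_comm,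
    bdCoeff_insert hwt, erase_insert hvp, bdCoeff_insert hwp, insertSign_insert_self,
    insertSign_insert_mul_insertSign_insert hwv hwp hvp]
  ring

theorem upCoeff_eq_zero_of_not_isPivotExchange {u : Finset ℕ} (hne : u ≠ t) (hcard : #u = #t)
    (hw : weight u ≤ weight t) (hx : ¬ IsPivotExchange n u t) : upCoeff n u t = (0 : k) := by
  unfold upCoeff
  split_ifs with hc
  swap
  · rfl
  by_cases hsub : t ⊆ insert (pivot u) u
  swap
  · rw [bdCoeff_of_not_subset hsub, mul_zero]
  exfalso
  have hvt : pivot u ∈ t := by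
    by_contra hvt
    refine hne (eq_of_subset_of_card_le (s := t) (fun x hx => ?_) hcard.le).symm
    exact (mem_insert.1 (hsub hx)).resolve_left fun h => hvt (h ▸ hx)
  obtain ⟨b, hbp, hbv, hb, hu⟩ := exists_eq_insert_of_weight_le
    (fun x hx => (mem_insert.1 (hsub (mem_of_mem_erase hx))).resolve_left (ne_of_mem_erase hx))
    (by rw [card_erase_add_one hvt, hcard]) (insert_erase hvt).symm (pivot_mod_three u) hne hw
  have hp : pivot (t.erase (pivot u)) = pivot u := by
    conv_rhs => rw [hu]
    rw [pivot_insert hb]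
  refine hx ⟨t.erase (pivot u), b, ?_, hbp, ?_, hb, ?_, hu, ?_⟩ <;> rw [hp]
  exacts [notMem_erase _ _, hbv, hc.2, (insert_erase hvt).symm]

theorem downCoeff_eq_zero_of_not_isPivotExchange {u : Finset ℕ} (hne : u ≠ t) (hcard : #u = #t)
    (hw : weight u ≤ weight t) (ht : ∀ x ∈ t, x ≤ n) (hx : ¬ IsPivotExchange n u t) :
    downCoeff u t = (0 : k) := by
  unfold downCoeff
  split_ifs with hvt
  swap
  · rfl
  by_cases hsub : t.erase (pivot t) ⊆ u
  swap
  · rw [bdCoeff_of_not_subset hsub, mul_zero]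
  exfalso
  obtain ⟨b, hbp, hbv, hb, hu⟩ := exists_eq_insert_of_weight_le hsub
    (by rw [card_erase_add_one hvt, hcard]) (insert_erase hvt).symm (pivot_mod_three t) hne hw
  have hp : pivot (t.erase (pivot t)) = pivot t := pivot_erase (pivot_mod_three_ne_two t)
  refine hx ⟨t.erase (pivot t), b, ?_, hbp, ?_, hb, ?_, hu, ?_⟩ <;> rw [hp]
  exacts [notMem_erase _ _, hbv, ht _ hvt, (insert_erase hvt).symm]

theorem upCoeff_add_downCoeff_of_ne {u : Finset ℕ} (hne : u ≠ t) (hcard : #u = #t)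
    (hw : weight u ≤ weight t) (ht : ∀ x ∈ t, x ≤ n) :
    upCoeff n u t + downCoeff u t = (0 : k) := by
  by_cases hx : IsPivotExchange n u t
  · exact upCoeff_add_downCoeff_of_isPivotExchange hx
  · rw [upCoeff_eq_zero_of_not_isPivotExchange hne hcard hw hx,
      downCoeff_eq_zero_of_not_isPivotExchange hne hcard hw ht hx, add_zero]

end Incidence

section Chains

variable (k : Type*) [Field k] (n : ℕ)

theorem deltaBd_apply (c : deltaChains k n (m + 1)) (t : {s // s ∈ deltaFaces n m}) :
    deltaBd k n m c t = ∑ s ∈ (deltaFaces n (m + 1)).attach, bdCoeff t.1 s.1 * c s :=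
  rfl

theorem deltaBd_comp_deltaBd (m : ℕ) : deltaBd k n m ∘ₗ deltaBd k n (m + 1) = 0 := by
  refine LinearMap.ext fun c => funext fun t => ?_
  simp only [LinearMap.comp_apply, deltaBd_apply, mul_sum, LinearMap.zero_apply, Pi.zero_apply]
  rw [sum_comm]
  refine sum_eq_zero fun r _ => ?_
  simp only [← mul_assoc, ← sum_mul]
  rw [sum_attach (deltaFaces n (m + 1)) fun s => bdCoeff t.1 s * bdCoeff s r.1,
    sum_bdCoeff_mul_bdCoeff, zero_mul]
  · rw [card_of_mem_deltaFaces r.2, card_of_mem_deltaFaces t.2]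
  · exact fun s hs => by rw [card_of_mem_deltaFaces hs, card_of_mem_deltaFaces t.2]
  · intro s _ hsr hs
    have := mem_deltaFaces_card_of_subset r.2 hsr
    rwa [hs, card_of_mem_deltaFaces t.2] at this

theorem deltaBd_single_apply (s : {s // s ∈ deltaFaces n (m + 1)})
    (t : {s // s ∈ deltaFaces n m}) : deltaBd k n m (Pi.single s 1) t = bdCoeff t.1 s.1 := by
  rw [deltaBd_apply, sum_eq_single_of_mem s (mem_attach _ _)
    fun r _ hr => by rw [Pi.single_eq_of_ne hr, mul_zero], Pi.single_eq_same, mul_one]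

/-- The chain homotopy of the matching: `e_u ↦ ± e_{insert (pivot u) u}` when that is a face. -/
noncomputable def homotopy (m : ℕ) : deltaChains k n m →ₗ[k] deltaChains k n (m + 1) where
  toFun c t := if h : pivot t.1 ∈ t.1 then
      insertSign t.1 (pivot t.1) * c ⟨t.1.erase (pivot t.1), erase_mem_deltaFaces t.2 h⟩
    else 0
  map_add' a b := by
    funext t
    by_cases h : pivot t.1 ∈ t.1 <;> simp [h, mul_add]
  map_smul' r c := by
    funext t
    by_cases h : pivot t.1 ∈ t.1 <;> simp [h, mul_left_comm]

theorem homotopy_apply (c : deltaChains k n m) (t : {s // s ∈ deltaFaces n (m + 1)}) :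
    homotopy k n m c t = if h : pivot t.1 ∈ t.1 then
      insertSign t.1 (pivot t.1) * c ⟨t.1.erase (pivot t.1), erase_mem_deltaFaces t.2 h⟩
    else 0 :=
  rfl

theorem homotopy_apply_of_pivot_notMem (c : deltaChains k n m)
    {t : {s // s ∈ deltaFaces n (m + 1)}} (h : pivot t.1 ∉ t.1) : homotopy k n m c t = 0 :=
  dif_neg h

theorem deltaBd_homotopy_single_apply (u t : {s // s ∈ deltaFaces n m}) :
    deltaBd k n m (homotopy k n m (Pi.single u 1)) t = upCoeff n u.1 t.1 := by
  have hzero : ∀ s : {s // s ∈ deltaFaces n (m + 1)},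
      ¬ (pivot u.1 ∉ u.1 ∧ pivot u.1 ≤ n ∧ s.1 = insert (pivot u.1) u.1) →
      homotopy k n m (Pi.single u 1) s = 0 := by
    intro s hs
    rw [homotopy_apply]
    split_ifs with h
    · refine mul_eq_zero_of_right _ (Pi.single_eq_of_ne (fun hsu => hs ?_) _)
      have hsu : s.1.erase (pivot s.1) = u.1 := congrArg Subtype.val hsu
      have hp : pivot u.1 = pivot s.1 := by rw [← hsu, pivot_erase (pivot_mod_three_ne_two _)]
      rw [hp, ← hsu]
      exact ⟨notMem_erase _ _, (mem_Icc_of_mem_deltaFaces s.2 h).2, (insert_erase h).symm⟩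
    · rfl
  rw [deltaBd_apply, upCoeff]
  split_ifs with hc
  · let s₀ : {s // s ∈ deltaFaces n (m + 1)} :=
      ⟨_, insert_pivot_mem_deltaFaces u.2 hc.1 hc.2⟩
    have hp : pivot s₀.1 = pivot u.1 := pivot_insert (pivot_mod_three_ne_two _)
    have hmem : pivot s₀.1 ∈ s₀.1 := by rw [hp]; exact mem_insert_self _ _
    have herase : (⟨s₀.1.erase (pivot s₀.1), erase_mem_deltaFaces s₀.2 hmem⟩ :
        {s // s ∈ deltaFaces n m}) = u :=
      Subtype.ext (by simp only [s₀, hp, erase_insert hc.1])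
    rw [sum_eq_single_of_mem s₀ (mem_attach _ _) fun s _ hs =>
      by rw [hzero s fun h => hs (Subtype.ext h.2.2), mul_zero]]
    rw [homotopy_apply, dif_pos hmem, herase, Pi.single_eq_same, mul_one, hp,
      insertSign_insert_self, mul_comm]
  · exact sum_eq_zero fun s _ => by rw [hzero s fun h => hc ⟨h.1, h.2.1⟩, mul_zero]

theorem homotopy_deltaBd_single_apply (u t : {s // s ∈ deltaFaces n (m + 1)}) :
    homotopy k n m (deltaBd k n m (Pi.single u 1)) t = downCoeff u.1 t.1 := by
  rw [homotopy_apply, downCoeff]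
  split_ifs
  · rw [deltaBd_single_apply]
  · rfl

noncomputable def flow (m : ℕ) : Module.End k (deltaChains k n (m + 1)) :=
  LinearMap.id - (deltaBd k n (m + 1) ∘ₗ homotopy k n (m + 1) + homotopy k n m ∘ₗ deltaBd k n m)

theorem flow_apply (x : deltaChains k n (m + 1)) (t : {s // s ∈ deltaFaces n (m + 1)}) :
    flow k n m x t = x t - ∑ u, x u * (upCoeff n u.1 t.1 + downCoeff u.1 t.1) := by
  have h := LinearMap.apply_eq_sum_mul_single_apply
    (deltaBd k n (m + 1) ∘ₗ homotopy k n (m + 1) + homotopy k n m ∘ₗ deltaBd k n m) x t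
  simp only [LinearMap.add_apply, LinearMap.comp_apply, Pi.add_apply,
    deltaBd_homotopy_single_apply, homotopy_deltaBd_single_apply] at h
  rw [flow, LinearMap.sub_apply, Pi.sub_apply, LinearMap.id_apply, LinearMap.add_apply,
    Pi.add_apply, LinearMap.comp_apply, LinearMap.comp_apply, h]

theorem pivot_le_and_weight_lt_of_flow_apply_ne_zero {w : ℕ} {x : deltaChains k n (m + 1)}
    (hx : ∀ u, x u ≠ 0 → pivot u.1 ≤ n ∧ weight u.1 < w + 1) (t : {s // s ∈ deltaFaces n (m + 1)})
    (ht : flow k n m x t ≠ 0) : pivot t.1 ≤ n ∧ weight t.1 < w := by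
  by_contra hcon
  refine ht ?_
  have hle : ∀ u, x u ≠ 0 → weight u.1 ≤ weight t.1 := by
    intro u hu
    by_cases hpt : pivot t.1 ≤ n
    · have := (hx u hu).2
      have := fun h => hcon ⟨hpt, h⟩
      omega
    · rw [weight_eq_card_of_lt_pivot t.2 (not_le.1 hpt)]
      exact (weight_le_card _).trans
        (by rw [card_of_mem_deltaFaces u.2, card_of_mem_deltaFaces t.2])
  rw [flow_apply, sub_eq_zero, sum_eq_single t]
  · by_cases hxt : x t = 0
    · rw [hxt, zero_mul]
    · rw [upCoeff_add_downCoeff_self (hx t hxt).1, mul_one]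
  · intro u _ hut
    by_cases hxu : x u = 0
    · rw [hxu, zero_mul]
    · rw [upCoeff_add_downCoeff_of_ne (fun h => hut (Subtype.ext h))
        (by rw [card_of_mem_deltaFaces u.2, card_of_mem_deltaFaces t.2]) (hle u hxu)
        (fun a ha => (mem_Icc_of_mem_deltaFaces t.2 ha).2), mul_zero]
  · simp

theorem flow_pow_apply_eq_zero {w : ℕ} {x : deltaChains k n (m + 1)}
    (hx : ∀ u, x u ≠ 0 → pivot u.1 ≤ n ∧ weight u.1 < w) : (flow k n m ^ w) x = 0 := by
  induction w generalizing x with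
  | zero => exact funext fun u => not_not.1 fun h => (Nat.not_lt_zero _ (hx u h).2)
  | succ w ih =>
    rw [pow_succ, Module.End.mul_apply]
    exact ih (pivot_le_and_weight_lt_of_flow_apply_ne_zero k n hx)

theorem exists_deltaBd_homotopy_eq {x : deltaChains k n (m + 1)} (hx : deltaBd k n m x = 0)
    (hsupp : ∀ u, x u ≠ 0 → pivot u.1 ≤ n) :
    ∃ y, deltaBd k n (m + 1) (homotopy k n (m + 1) y) = x :=
  ⟨_, bd_homotopy_sum_pow_apply_eq_self _ _ _ _ (deltaBd_comp_deltaBd k n m) hx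
    (flow_pow_apply_eq_zero k n (w := m + 2) fun u hu => ⟨hsupp u hu,
      (weight_le_card _).trans_lt (by rw [card_of_mem_deltaFaces u.2]; omega)⟩)⟩

theorem deltaBd_homotopy_zero (hn : 1 ≤ n) (x : deltaChains k n 0) :
    deltaBd k n 0 (homotopy k n 0 x) = x := by
  have hempty : ∀ t : {s // s ∈ deltaFaces n 0}, t.1 = ∅ :=
    fun t => card_eq_zero.1 (card_of_mem_deltaFaces t.2)
  funext t
  have h := LinearMap.apply_eq_sum_mul_single_apply (deltaBd k n 0 ∘ₗ homotopy k n 0) x t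
  simp only [LinearMap.comp_apply, deltaBd_homotopy_single_apply] at h
  rw [h, sum_eq_single t
    (fun u _ hu => absurd (Subtype.ext ((hempty u).trans (hempty t).symm)) hu) (by simp),
    hempty t, upCoeff_self (by simp) (by rw [pivot_empty]; exact hn), mul_one]

theorem mem_range_deltaBd {x : deltaChains k n (m + 1)} (hx : x ∈ LinearMap.ker (deltaBd k n m))
    (hsupp : ∀ u, x u ≠ 0 → pivot u.1 ≤ n) : x ∈ LinearMap.range (deltaBd k n (m + 1)) :=
  let ⟨_, hy⟩ := exists_deltaBd_homotopy_eq k n hx hsupp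
  ⟨_, hy⟩

theorem ker_deltaBd_eq_range (h : ∀ s ∈ deltaFaces n (m + 1), pivot s ≤ n) :
    LinearMap.ker (deltaBd k n m) = LinearMap.range (deltaBd k n (m + 1)) :=
  le_antisymm (fun _ hx => mem_range_deltaBd k n hx fun u _ => h u.1 u.2)
    (LinearMap.range_le_ker_iff.2 (deltaBd_comp_deltaBd k n m))

theorem exists_mem_ker_deltaBd_apply_eq_one (hn : 1 ≤ n) (c : {s // s ∈ deltaFaces n (m + 1)})
    (hc : pivot c.1 ∉ c.1) (hlow : ∀ s ∈ deltaFaces n m, pivot s ≤ n) :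
    ∃ z ∈ LinearMap.ker (deltaBd k n m), z c = 1 := by
  obtain ⟨y, hy⟩ : ∃ y, deltaBd k n m (homotopy k n m y) = deltaBd k n m (Pi.single c 1) := by
    cases m with
    | zero => exact ⟨_, deltaBd_homotopy_zero k n hn _⟩
    | succ m =>
      exact exists_deltaBd_homotopy_eq k n
        (LinearMap.congr_fun (deltaBd_comp_deltaBd k n m) _) fun u _ => hlow u.1 u.2
  refine ⟨Pi.single c 1 - homotopy k n m y, by rw [LinearMap.mem_ker, map_sub, hy, sub_self], ?_⟩
  rw [Pi.sub_apply, Pi.single_eq_same, homotopy_apply_of_pivot_notMem k n _ hc, sub_zero]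

theorem nonempty_homology_critFace_equiv (hn : 1 ≤ n) (hmod : n % 3 ≠ 1) :
    Nonempty ((LinearMap.ker (deltaBd k n ((n - 2) / 3)) ⧸
      Submodule.comap (LinearMap.ker (deltaBd k n ((n - 2) / 3))).subtype
        (LinearMap.range (deltaBd k n ((n - 2) / 3 + 1)))) ≃ₗ[k] k) := by
  let c : {s // s ∈ deltaFaces n ((n - 2) / 3 + 1)} :=
    ⟨critFace ((n - 2) / 3 + 1), critFace_mem_deltaFaces hn hmod⟩
  let q : LinearMap.ker (deltaBd k n ((n - 2) / 3)) →ₗ[k] k :=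
    (LinearMap.proj c).comp (Submodule.subtype _)
  have hq : Function.Surjective q := by
    obtain ⟨z, hz, hzc⟩ := exists_mem_ker_deltaBd_apply_eq_one k n hn c
      (pivot_notMem_critFace _) fun s hs => not_lt.1 fun hcrit => by
        have := (eq_critFace_of_lt_pivot hn hs hcrit).2.1
        omega
    exact fun a => ⟨a • ⟨z, hz⟩, by simp [q, hzc]⟩
  have hker : LinearMap.ker q = Submodule.comap (LinearMap.ker (deltaBd k n ((n - 2) / 3))).subtype
      (LinearMap.range (deltaBd k n ((n - 2) / 3 + 1))) := by
    ext x
    rw [LinearMap.mem_ker, Submodule.mem_comap]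
    constructor
    · intro hxc
      refine mem_range_deltaBd k n x.2 fun u hu => not_lt.1 fun hcrit => hu ?_
      rwa [show u = c from Subtype.ext (eq_critFace_of_lt_pivot hn u.2 hcrit).2.2]
    · rintro ⟨y, hy⟩
      change x.1 c = 0
      rw [← Submodule.coe_subtype, ← hy, deltaBd_apply]
      exact sum_eq_zero fun s _ => by
        rw [bdCoeff_of_not_subset (critFace_not_subset hn hmod s.2), zero_mul]
  exact ⟨(Submodule.quotEquivOfEq _ _ hker.symm).trans (q.quotKerEquivOfSurjective hq)⟩

end Chains

end Delta

/-- Reduced simplicial homology of `Δ[n]` with coefficients in a field `k`: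
it vanishes in all degrees when `n ≡ 1 (mod 3)`, and is `k` in degree
`⌊(n−2)/3⌋` and zero elsewhere when `n ≡ 2` or `n ≡ 0 (mod 3)`.
(Homology in degree `d` lives at cardinality level `d + 1`; surjectivity of
`∂ : C_1 → C_0` expresses vanishing in degree `−1`.) -/
theorem stmt_7 (k : Type*) [Field k] (n : ℕ) (hn : 1 ≤ n) :
    (n % 3 = 1 →
      Function.Surjective (deltaBd k n 0) ∧
      ∀ m : ℕ, LinearMap.ker (deltaBd k n m) = LinearMap.range (deltaBd k n (m + 1))) ∧
    ((n % 3 = 2 ∨ n % 3 = 0) →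
      Function.Surjective (deltaBd k n 0) ∧
      (∀ m : ℕ, m ≠ (n - 2) / 3 →
        LinearMap.ker (deltaBd k n m) = LinearMap.range (deltaBd k n (m + 1))) ∧
      Nonempty
        ((LinearMap.ker (deltaBd k n ((n - 2) / 3)) ⧸
            Submodule.comap (LinearMap.ker (deltaBd k n ((n - 2) / 3))).subtype
              (LinearMap.range (deltaBd k n ((n - 2) / 3 + 1)))) ≃ₗ[k] k)) := by
  have hsurj : Function.Surjective (deltaBd k n 0) :=
    fun x => ⟨_, Delta.deltaBd_homotopy_zero k n hn x⟩
  refine ⟨fun hmod => ⟨hsurj, fun m => Delta.ker_deltaBd_eq_range k n fun s hs => ?_⟩,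
    fun hmod => ⟨hsurj, fun m hm => Delta.ker_deltaBd_eq_range k n fun s hs => ?_,
      Delta.nonempty_homology_critFace_equiv k n hn (by omega)⟩⟩
  · exact not_lt.1 fun hcrit => (Delta.eq_critFace_of_lt_pivot hn hs hcrit).1 hmod
  · exact not_lt.1 fun hcrit =>
      hm (by have := (Delta.eq_critFace_of_lt_pivot hn hs hcrit).2.1; omega)
end

section
/- In the simplicial complex Δ[5] (faces of {1,...,5} whose elements pairwise differ by at least 2), the 1-cycle {1,5} − {1,4} + {2,4} − {2,5} is a cycle representing a generator of H₁(Δ[5]; k) ≅ k. -/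
/-- The 1-chain `{1,5} − {1,4} + {2,4} − {2,5}` of `Δ[5]`. -/
def loopChain (k : Type*) [Field k] : deltaChains k 5 2 := fun s =>
  if s.1 = {1, 5} then 1 else if s.1 = {1, 4} then -1
  else if s.1 = {2, 4} then 1 else if s.1 = {2, 5} then -1 else 0

open Finset

def chainCoeff {k : Type*} [Zero k] {n m : ℕ} (c : deltaChains k n m) (s : Finset ℕ) : k :=
  if h : s ∈ deltaFaces n m then c ⟨s, h⟩ else 0

theorem chainCoeff_of_mem {k : Type*} [Zero k] {n m : ℕ} (c : deltaChains k n m)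
    {s : Finset ℕ} (h : s ∈ deltaFaces n m) : chainCoeff c s = c ⟨s, h⟩ :=
  dif_pos h

theorem deltaChains_ext_iff {k : Type*} [Zero k] {n m : ℕ} {F : Finset (Finset ℕ)}
    (hF : deltaFaces n m = F) {z w : deltaChains k n m} :
    z = w ↔ ∀ s ∈ F, chainCoeff z s = chainCoeff w s := by
  subst hF
  refine ⟨fun h _ _ => h ▸ rfl, fun h => funext fun ⟨s, hs⟩ => ?_⟩
  rw [← chainCoeff_of_mem z hs, ← chainCoeff_of_mem w hs, h s hs]

@[simp]
theorem chainCoeff_zero {k : Type*} [Zero k] {n m : ℕ} (s : Finset ℕ) :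
    chainCoeff (0 : deltaChains k n m) s = 0 := by
  simp [chainCoeff]

@[simp]
theorem chainCoeff_add {k : Type*} [AddZeroClass k] {n m : ℕ} (z w : deltaChains k n m)
    (s : Finset ℕ) : chainCoeff (z + w) s = chainCoeff z s + chainCoeff w s := by
  unfold chainCoeff
  split_ifs <;> simp

@[simp]
theorem chainCoeff_smul {k : Type*} [MulZeroClass k] {n m : ℕ} (a : k) (z : deltaChains k n m)
    (s : Finset ℕ) : chainCoeff (a • z) s = a * chainCoeff z s := by
  unfold chainCoeff
  split_ifs <;> simp

theorem chainCoeff_deltaBd {k : Type*} [Field k] {n m : ℕ} {F : Finset (Finset ℕ)}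
    (hF : deltaFaces n (m + 1) = F) (c : deltaChains k n (m + 1)) {t : Finset ℕ}
    (ht : t ∈ deltaFaces n m) :
    chainCoeff (deltaBd k n m c) t = ∑ s ∈ F,
      (if t ⊆ s then (-1 : k) ^ (∑ v ∈ s \ t, (s.filter (· < v)).card) else 0)
        * chainCoeff c s := by
  subst hF
  rw [chainCoeff_of_mem _ ht, ← sum_attach]
  simp only [chainCoeff_of_mem c (Subtype.prop _)]
  rfl

theorem deltaFaces_five_one : deltaFaces 5 1 = {{1}, {2}, {3}, {4}, {5}} := by decide

theorem deltaFaces_five_two :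
    deltaFaces 5 2 = {{1, 3}, {1, 4}, {1, 5}, {2, 4}, {2, 5}, {3, 5}} := by decide

theorem deltaFaces_five_three : deltaFaces 5 3 = {{1, 3, 5}} := by decide

theorem deltaBd_five_one_eq_zero_iff {k : Type*} [Field k] (z : deltaChains k 5 2) :
    deltaBd k 5 1 z = 0 ↔
      chainCoeff z {1, 3} + chainCoeff z {1, 4} + chainCoeff z {1, 5} = 0 ∧
      chainCoeff z {2, 4} + chainCoeff z {2, 5} = 0 ∧
      chainCoeff z {1, 3} = chainCoeff z {3, 5} ∧
      chainCoeff z {1, 4} + chainCoeff z {2, 4} = 0 ∧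
      chainCoeff z {1, 5} + chainCoeff z {2, 5} + chainCoeff z {3, 5} = 0 := by
  rw [deltaChains_ext_iff deltaFaces_five_one]
  simp only [mem_insert, mem_singleton, forall_eq_or_imp, forall_eq]
  simp (disch := decide) only [chainCoeff_deltaBd deltaFaces_five_two z]
  simp +decide only [singleton_subset_iff, Nat.reduceAdd, ite_mul, zero_mul, mem_insert,
    not_false_eq_true, sum_insert, ↓reduceIte, Odd.neg_one_pow, neg_mul, one_mul, mem_singleton,
    sum_singleton, add_zero, chainCoeff_zero, zero_add, insert_sdiff_cancel, Order.lt_one_iff,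
    Even.neg_pow, one_pow, Order.lt_two_iff]
  constructor <;> rintro ⟨h1, h2, h3, h4, h5⟩ <;> refine ⟨?_, ?_, ?_, ?_, ?_⟩ <;> grind

def triangleBoundary (k : Type*) [Ring k] : deltaChains k 5 2 := fun s =>
  if s.1 = {1, 3} then 1 else if s.1 = {1, 5} then -1 else if s.1 = {3, 5} then 1 else 0

theorem deltaBd_five_two_eq_smul {k : Type*} [Field k] (b : deltaChains k 5 3) :
    deltaBd k 5 2 b = chainCoeff b {1, 3, 5} • triangleBoundary k := by
  rw [deltaChains_ext_iff deltaFaces_five_two]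
  simp only [mem_insert, mem_singleton, forall_eq_or_imp, forall_eq]
  simp (disch := decide) only [chainCoeff_deltaBd deltaFaces_five_three b]
  simp +decide [chainCoeff, triangleBoundary]

theorem deltaBd_loopChain {k : Type*} [Field k] : deltaBd k 5 1 (loopChain k) = 0 :=
  (deltaBd_five_one_eq_zero_iff _).2 (by simp +decide [chainCoeff, loopChain])

theorem loopChain_not_mem_range_deltaBd {k : Type*} [Field k] :
    loopChain k ∉ LinearMap.range (deltaBd k 5 2) := by
  rintro ⟨b, hb⟩
  rw [deltaBd_five_two_eq_smul] at hb
  have h13 := congrArg (chainCoeff · {1, 3}) hb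
  have h15 := congrArg (chainCoeff · {1, 5}) hb
  simp (disch := decide) only [chainCoeff_smul, chainCoeff_of_mem (loopChain k),
    chainCoeff_of_mem (triangleBoundary k)] at h13 h15
  simp +decide only [loopChain, triangleBoundary, ↓reduceIte, mul_one, mul_neg] at h13 h15
  simp [h13] at h15

theorem exists_eq_smul_loopChain_add_deltaBd {k : Type*} [Field k] (z : deltaChains k 5 2)
    (hz : deltaBd k 5 1 z = 0) :
    ∃ (a : k) (b : deltaChains k 5 3), z = a • loopChain k + deltaBd k 5 2 b := by
  obtain ⟨h1, h2, h3, h4, -⟩ := (deltaBd_five_one_eq_zero_iff z).1 hz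
  refine ⟨chainCoeff z {1, 5} + chainCoeff z {1, 3}, fun _ => chainCoeff z {1, 3}, ?_⟩
  rw [deltaBd_five_two_eq_smul, deltaChains_ext_iff deltaFaces_five_two]
  simp only [mem_insert, mem_singleton, forall_eq_or_imp, forall_eq]
  simp (disch := decide) only [chainCoeff_add, chainCoeff_smul, chainCoeff_of_mem (loopChain k),
    chainCoeff_of_mem (triangleBoundary k), chainCoeff_of_mem (fun _ => chainCoeff z {1, 3})]
  simp +decide only [loopChain, triangleBoundary, ↓reduceIte, mul_zero, mul_one, zero_add, mul_neg,
    neg_add_rev, add_zero, add_neg_cancel_right, true_and]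
  exact ⟨by linear_combination h1, by linear_combination h4 - h1,
    by linear_combination h2 - h4 + h1, h3.symm⟩

/-- In `Δ[5]`, the 1-chain `{1,5} − {1,4} + {2,4} − {2,5}` is a cycle which is
not a boundary, and it generates `H₁(Δ[5]; k) ≅ k`. -/
theorem stmt_8 (k : Type*) [Field k] :
    deltaBd k 5 1 (loopChain k) = 0 ∧
    loopChain k ∉ LinearMap.range (deltaBd k 5 2) ∧
    ∀ z : deltaChains k 5 2, deltaBd k 5 1 z = 0 →
      ∃ (a : k) (b : deltaChains k 5 3), z = a • loopChain k + deltaBd k 5 2 b :=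
  ⟨deltaBd_loopChain, loopChain_not_mem_range_deltaBd, exists_eq_smul_loopChain_add_deltaBd⟩
end
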